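/- arXiv:2211.01581 — 4 statements merged into one kernel-verified Lean document; each statement's English description precedes it below -/
import Mathlib

section
/- For every n ∈ ℤ and every k ∈ ℕ₀, the weight subspace M(n)^{(n−2k)} of the Verma module M(n) equals the linear span of the elements y^i x^j·z_n with i + j = k, and M(n) = ⊕_{k∈ℕ₀} M(n)^{(n−2k)}. -/
/-!
We formalize the double of the Jordan plane `𝒟` (Andruskiewitsch–Peña Pollastri) as the
quotient of the free algebra on generators `u, v, ξ, g, g⁻¹, x, y` by the defining relations.
-/

noncomputable section

open FreeAlgebra

/-- Generators of the double of the Jordan plane. -/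
inductive DGen : Type
  | u | v | xi | g | ginv | x | y

/-- The defining relations of the double of the Jordan plane. -/
inductive DRel (k : Type) [Field k] : FreeAlgebra k DGen → FreeAlgebra k DGen → Prop
  | g_ginv : DRel k (ι k DGen.g * ι k DGen.ginv) 1
  | ginv_g : DRel k (ι k DGen.ginv * ι k DGen.g) 1
  | xi_g : DRel k (ι k DGen.xi * ι k DGen.g) (ι k DGen.g * ι k DGen.xi)
  | g_x : DRel k (ι k DGen.g * ι k DGen.x) (ι k DGen.x * ι k DGen.g)
  | g_y : DRel k (ι k DGen.g * ι k DGen.y) (ι k DGen.y * ι k DGen.g + ι k DGen.x * ι k DGen.g)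
  | xi_y : DRel k (ι k DGen.xi * ι k DGen.y) (ι k DGen.y * ι k DGen.xi - 2 * ι k DGen.y)
  | xi_x : DRel k (ι k DGen.xi * ι k DGen.x) (ι k DGen.x * ι k DGen.xi - 2 * ι k DGen.x)
  | u_g : DRel k (ι k DGen.u * ι k DGen.g) (ι k DGen.g * ι k DGen.u)
  | v_g : DRel k (ι k DGen.v * ι k DGen.g) (ι k DGen.g * ι k DGen.v + ι k DGen.g * ι k DGen.u)
  | v_xi : DRel k (ι k DGen.v * ι k DGen.xi) (ι k DGen.xi * ι k DGen.v - 2 * ι k DGen.v)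
  | u_xi : DRel k (ι k DGen.u * ι k DGen.xi) (ι k DGen.xi * ι k DGen.u - 2 * ι k DGen.u)
  | y_x : DRel k (ι k DGen.y * ι k DGen.x)
      (ι k DGen.x * ι k DGen.y - (1 / 2 : k) • (ι k DGen.x * ι k DGen.x))
  | v_u : DRel k (ι k DGen.v * ι k DGen.u)
      (ι k DGen.u * ι k DGen.v - (1 / 2 : k) • (ι k DGen.u * ι k DGen.u))
  | u_x : DRel k (ι k DGen.u * ι k DGen.x) (ι k DGen.x * ι k DGen.u)
  | v_x : DRel k (ι k DGen.v * ι k DGen.x)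
      (ι k DGen.x * ι k DGen.v + (1 - ι k DGen.g) + ι k DGen.x * ι k DGen.u)
  | u_y : DRel k (ι k DGen.u * ι k DGen.y) (ι k DGen.y * ι k DGen.u + (1 - ι k DGen.g))
  | v_y : DRel k (ι k DGen.v * ι k DGen.y)
      (ι k DGen.y * ι k DGen.v + (1 / 2 : k) • (ι k DGen.g * ι k DGen.xi) + ι k DGen.y * ι k DGen.u)

/-- The double of the Jordan plane `𝒟`. -/
abbrev D (k : Type) [Field k] : Type := RingQuot (DRel k)

variable (k : Type) [Field k]

/-- The generator `g` of `𝒟`. -/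
def Dg : D k := RingQuot.mkAlgHom k (DRel k) (ι k DGen.g)

/-- The generator `g⁻¹` of `𝒟`. -/
def Dginv : D k := RingQuot.mkAlgHom k (DRel k) (ι k DGen.ginv)

/-- The generator `ξ` of `𝒟`. -/
def Dxi : D k := RingQuot.mkAlgHom k (DRel k) (ι k DGen.xi)

/-- The generator `u` of `𝒟`. -/
def Du : D k := RingQuot.mkAlgHom k (DRel k) (ι k DGen.u)

/-- The generator `v` of `𝒟`. -/
def Dv : D k := RingQuot.mkAlgHom k (DRel k) (ι k DGen.v)

/-- The generator `x` of `𝒟`. -/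
def Dx : D k := RingQuot.mkAlgHom k (DRel k) (ι k DGen.x)

/-- The generator `y` of `𝒟`. -/
def Dy : D k := RingQuot.mkAlgHom k (DRel k) (ι k DGen.y)

variable {k}

private lemma pow_smul_eq_zero {M : Type} [AddCommGroup M] [Module (D k) M]
    {p : D k} {m : M} {a : ℕ} (c : ℕ) (h : p ^ a • m = 0) : p ^ (a + c) • m = 0 := by
  rw [add_comm, pow_add, mul_smul, h, smul_zero]

/-- The weight subspace `M^{(n)}` of a `𝒟`-module `M`:
all `m` killed by some power of `ξ - n` and some power of `g - 1`. -/
def wt (M : Type) [AddCommGroup M] [Module k M] [Module (D k) M]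
    [IsScalarTower k (D k) M] (n : ℤ) : Submodule k M where
  carrier := {m | (∃ a : ℕ, (Dxi k - (n : D k)) ^ a • m = 0) ∧
    (∃ b : ℕ, (Dg k - 1) ^ b • m = 0)}
  zero_mem' := ⟨⟨0, smul_zero _⟩, ⟨0, smul_zero _⟩⟩
  add_mem' := by
    rintro m₁ m₂ ⟨⟨a₁, ha₁⟩, ⟨b₁, hb₁⟩⟩ ⟨⟨a₂, ha₂⟩, ⟨b₂, hb₂⟩⟩
    refine ⟨⟨a₁ + a₂, ?_⟩, ⟨b₁ + b₂, ?_⟩⟩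
    · rw [smul_add, pow_smul_eq_zero a₂ ha₁, add_comm a₁ a₂, pow_smul_eq_zero a₁ ha₂, add_zero]
    · rw [smul_add, pow_smul_eq_zero b₂ hb₁, add_comm b₁ b₂, pow_smul_eq_zero b₁ hb₂, add_zero]
  smul_mem' := by
    rintro c m ⟨⟨a, ha⟩, ⟨b, hb⟩⟩
    refine ⟨⟨a, ?_⟩, ⟨b, ?_⟩⟩
    · rw [← smul_comm c ((Dxi k - ((_ : ℤ) : D k)) ^ a) m, ha, smul_zero]
    · rw [← smul_comm c ((Dg k - 1) ^ b) m, hb, smul_zero]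

variable (k) in
/-- The left ideal `I_n = 𝒟(g − 1) + 𝒟(ξ − n) + 𝒟u + 𝒟v` of `𝒟`. -/
def vermaIdeal (n : ℤ) : Submodule (D k) (D k) :=
  Submodule.span (D k) {Dg k - 1, Dxi k - (n : D k), Du k, Dv k}

variable (k) in
/-- The Verma module `M(n) = 𝒟/I_n`. -/
abbrev Verma (n : ℤ) : Type := D k ⧸ vermaIdeal k n

variable (k) in
/-- The highest weight vector `z_n ∈ M(n)`, the image of `1`. -/
def vermaGen (n : ℤ) : Verma k n := Submodule.Quotient.mk 1


namespace VermaSix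

variable {k : Type} [Field k]

/-- Extract a relation in `D`. -/
lemma rel {a b : FreeAlgebra k DGen} (h : DRel k a b) :
    RingQuot.mkAlgHom k (DRel k) a = RingQuot.mkAlgHom k (DRel k) b :=
  RingQuot.mkAlgHom_rel k h

lemma rel_gx : Dg k * Dx k = Dx k * Dg k := by
  simpa only [Dg, Dx, map_mul] using rel (DRel.g_x (k := k))

lemma rel_gy : Dg k * Dy k = Dy k * Dg k + Dx k * Dg k := by
  simpa only [Dg, Dy, Dx, map_mul, map_add] using rel (DRel.g_y (k := k))

lemma rel_xiy : Dxi k * Dy k = Dy k * Dxi k - 2 * Dy k := by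
  simpa only [Dxi, Dy, map_mul, map_sub, map_ofNat] using rel (DRel.xi_y (k := k))

lemma rel_xix : Dxi k * Dx k = Dx k * Dxi k - 2 * Dx k := by
  simpa only [Dxi, Dx, map_mul, map_sub, map_ofNat] using rel (DRel.xi_x (k := k))

lemma rel_yx : Dy k * Dx k = Dx k * Dy k - (1 / 2 : k) • (Dx k * Dx k) := by
  simpa only [Dy, Dx, map_mul, map_sub, map_smul] using rel (DRel.y_x (k := k))

lemma rel_ux : Du k * Dx k = Dx k * Du k := by
  simpa only [Du, Dx, map_mul] using rel (DRel.u_x (k := k))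

lemma rel_uy : Du k * Dy k = Dy k * Du k + (1 - Dg k) := by
  simpa only [Du, Dy, Dg, map_mul, map_add, map_sub, map_one] using rel (DRel.u_y (k := k))

lemma rel_vx : Dv k * Dx k = Dx k * Dv k + (1 - Dg k) + Dx k * Du k := by
  simpa only [Dv, Dx, Dg, Du, map_mul, map_add, map_sub, map_one] using rel (DRel.v_x (k := k))

lemma rel_vy : Dv k * Dy k = Dy k * Dv k + (1 / 2 : k) • (Dg k * Dxi k) + Dy k * Du k := by
  simpa only [Dv, Dy, Dg, Dxi, Du, map_mul, map_add, map_smul] using rel (DRel.v_y (k := k))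

lemma rel_ggi : Dg k * Dginv k = 1 := by
  simpa only [Dg, Dginv, map_mul, map_one] using rel (DRel.g_ginv (k := k))

lemma rel_gig : Dginv k * Dg k = 1 := by
  simpa only [Dg, Dginv, map_mul, map_one] using rel (DRel.ginv_g (k := k))

lemma conj_eq {a b : D k} (h : Dg k * a = b * Dg k) : Dginv k * b = a * Dginv k := by
  have h2 : Dginv k * (Dg k * a) * Dginv k = Dginv k * (b * Dg k) * Dginv k := by rw [h]
  rw [← mul_assoc (Dginv k) (Dg k) a, rel_gig, one_mul, ← mul_assoc (Dginv k) b (Dg k),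
    mul_assoc (Dginv k * b) (Dg k) (Dginv k), rel_ggi, mul_one] at h2
  exact h2.symm

lemma rel_gix : Dginv k * Dx k = Dx k * Dginv k := conj_eq rel_gx

lemma rel_giy : Dginv k * Dy k = Dy k * Dginv k - Dx k * Dginv k := by
  have h : Dg k * Dy k = (Dy k + Dx k) * Dg k := by rw [rel_gy, add_mul]
  have h2 := conj_eq h
  rw [mul_add, rel_gix] at h2
  -- h2 : Dginv * Dy + Dx * Dginv = Dy * Dginv
  rw [eq_sub_iff_add_eq]
  exact h2

section Module

variable (n : ℤ)

lemma smul_comm' (c : k) (r : D k) (m : Verma k n) : r • c • m = c • r • m :=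
  smul_comm r c m

lemma ideal_smul_z {d : D k} (hd : d ∈ vermaIdeal k n) : d • vermaGen k n = 0 := by
  unfold vermaGen
  rw [← Submodule.Quotient.mk_smul, smul_eq_mul, mul_one]
  exact (Submodule.Quotient.mk_eq_zero _).mpr hd

lemma hu_z : Du k • vermaGen k n = 0 :=
  ideal_smul_z n (Submodule.subset_span (by simp [Set.mem_insert_iff]))

lemma hv_z : Dv k • vermaGen k n = 0 :=
  ideal_smul_z n (Submodule.subset_span (by simp [Set.mem_insert_iff]))

lemma hg_z : Dg k • vermaGen k n = vermaGen k n := by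
  have h := ideal_smul_z n (d := Dg k - 1) (Submodule.subset_span (by simp [Set.mem_insert_iff]))
  rw [sub_smul, one_smul, sub_eq_zero] at h
  exact h

lemma int_smul (m : ℤ) (v : Verma k n) : ((m : D k)) • v = ((m : k)) • v := by
  rw [Int.cast_smul_eq_zsmul (D k) m v, Int.cast_smul_eq_zsmul k m v]

lemma hxi_z : Dxi k • vermaGen k n = ((n : k)) • vermaGen k n := by
  have h := ideal_smul_z n (d := Dxi k - (n : D k))
    (Submodule.subset_span (by simp [Set.mem_insert_iff]))
  rw [sub_smul, sub_eq_zero] at h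
  rw [h, int_smul]

lemma hgi_z : Dginv k • vermaGen k n = vermaGen k n := by
  conv_lhs => rw [← hg_z n, ← mul_smul, rel_gig, one_smul]

variable (k) in
/-- The basis monomials `yⁱxʲ·z`. -/
def wm (i j : ℕ) : Verma k n := (Dy k ^ i * Dx k ^ j) • vermaGen k n

lemma wm_zero : wm k n 0 0 = vermaGen k n := by simp [wm]

lemma wm_ysucc (i j : ℕ) : wm k n (i + 1) j = Dy k • wm k n i j := by
  rw [wm, wm, pow_succ', mul_assoc, mul_smul]

lemma wm_x (j : ℕ) : wm k n 0 j = Dx k ^ j • vermaGen k n := by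
  rw [wm, pow_zero, one_mul]

lemma wm_xsucc (j : ℕ) : wm k n 0 (j + 1) = Dx k • wm k n 0 j := by
  rw [wm_x, wm_x, pow_succ', mul_smul]

variable (k) in
/-- Filtration by `y`-degree (strict): span of `wm i' j` with `i' < i`. -/
def Ti (i : ℕ) : Submodule k (Verma k n) :=
  Submodule.span k {w | ∃ i' j, i' < i ∧ w = wm k n i' j}

variable (k) in
/-- Weight-`c` span. -/
def SC (c : ℕ) : Submodule k (Verma k n) :=
  Submodule.span k {w : Verma k n | ∃ i j : ℕ, i + j = c ∧ w = (Dy k ^ i * Dx k ^ j) • vermaGen k n}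

variable (k) in
/-- Span of all monomials. -/
def Tot : Submodule k (Verma k n) :=
  Submodule.span k {w | ∃ i j, w = wm k n i j}

lemma wm_mem_Ti {i i' : ℕ} (h : i' < i) (j : ℕ) : wm k n i' j ∈ Ti k n i :=
  Submodule.subset_span ⟨i', j, h, rfl⟩

lemma wm_mem_Tot (i j : ℕ) : wm k n i j ∈ Tot k n :=
  Submodule.subset_span ⟨i, j, rfl⟩

lemma Ti_mono {i i' : ℕ} (h : i ≤ i') : Ti k n i ≤ Ti k n i' :=
  Submodule.span_mono (fun w ⟨a, b, hab, hw⟩ => ⟨a, b, lt_of_lt_of_le hab h, hw⟩)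

lemma Ti_le_Tot (i : ℕ) : Ti k n i ≤ Tot k n :=
  Submodule.span_mono (fun w ⟨a, b, _, hw⟩ => ⟨a, b, hw⟩)

lemma smul_span_le {r : D k} {s : Set (Verma k n)} {U : Submodule k (Verma k n)}
    (h : ∀ m ∈ s, r • m ∈ U) : ∀ m ∈ Submodule.span k s, r • m ∈ U := by
  intro m hm
  induction hm using Submodule.span_induction with
  | mem _ h' => exact h _ h'
  | zero => rw [smul_zero]; exact U.zero_mem
  | add a b _ _ ha hb => rw [smul_add]; exact U.add_mem ha hb
  | smul c a _ ha => rw [smul_comm' n c r a]; exact U.smul_mem c ha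

lemma rel_xy : Dx k * Dy k = Dy k * Dx k + (1 / 2 : k) • (Dx k * Dx k) := by
  rw [rel_yx, sub_add_cancel]

lemma x_smul_wm : ∀ i j, Dx k • wm k n i j ∈ Ti k n (i + 1) := by
  intro i
  induction i using Nat.strong_induction_on with
  | _ i IH =>
    have hxmap : ∀ m ≤ i, ∀ w ∈ Ti k n m, Dx k • w ∈ Ti k n m := by
      intro m hm
      apply smul_span_le
      rintro w ⟨i', j', hi', rfl⟩
      exact Ti_mono n (by omega) (IH i' (by omega) j')
    have hymap : ∀ m, ∀ w ∈ Ti k n m, Dy k • w ∈ Ti k n (m + 1) := by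
      intro m
      apply smul_span_le
      rintro w ⟨i', j', hi', rfl⟩
      rw [← wm_ysucc]
      exact wm_mem_Ti n (by omega) j'
    match i with
    | 0 =>
      intro j
      rw [wm_x, ← mul_smul, ← pow_succ', ← wm_x]
      exact wm_mem_Ti n (by omega) (j + 1)
    | i + 1 =>
      intro j
      have key : Dx k • wm k n (i + 1) j
          = Dy k • (Dx k • wm k n i j) + (1 / 2 : k) • (Dx k • (Dx k • wm k n i j)) := by
        rw [wm_ysucc, ← mul_smul, rel_xy]
        simp only [add_smul, mul_smul, smul_assoc]
      rw [key]
      have h1 : Dx k • wm k n i j ∈ Ti k n (i + 1) := IH i (by omega) j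
      refine Submodule.add_mem _ (hymap _ _ h1) (Submodule.smul_mem _ _ ?_)
      exact Ti_mono n (by omega) (hxmap (i + 1) le_rfl _ h1)

lemma x_map_Ti (i : ℕ) : ∀ w ∈ Ti k n i, Dx k • w ∈ Ti k n i := by
  apply smul_span_le
  rintro w ⟨i', j', hi', rfl⟩
  exact Ti_mono n (by omega) (x_smul_wm n i' j')

lemma y_map_Ti (i : ℕ) : ∀ w ∈ Ti k n i, Dy k • w ∈ Ti k n (i + 1) := by
  apply smul_span_le
  rintro w ⟨i', j', hi', rfl⟩
  rw [← wm_ysucc]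
  exact wm_mem_Ti n (by omega) j'

lemma g_smul_wm : ∀ i j, (Dg k - 1) • wm k n i j ∈ Ti k n i := by
  intro i
  induction i with
  | zero =>
    intro j
    have : Dg k • wm k n 0 j = wm k n 0 j := by
      rw [wm_x, ← mul_smul, (Commute.pow_right (rel_gx (k := k)) j).eq, mul_smul, hg_z]
    rw [sub_smul, one_smul, this, sub_self]
    exact Submodule.zero_mem _
  | succ i IH =>
    intro j
    have key : (Dg k - 1) • wm k n (i + 1) j
        = Dy k • ((Dg k - 1) • wm k n i j)
          + Dx k • ((Dg k - 1) • wm k n i j + wm k n i j) := by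
      rw [wm_ysucc, sub_smul, one_smul, ← mul_smul, rel_gy, add_smul, mul_smul, mul_smul]
      simp only [smul_sub, smul_add, sub_smul, one_smul]
      abel
    rw [key]
    refine Submodule.add_mem _ (y_map_Ti n i _ (IH j)) (x_map_Ti n (i + 1) _ ?_)
    exact Submodule.add_mem _ (Ti_mono n (by omega) (IH j)) (wm_mem_Ti n (by omega) j)

lemma two_smul' (m : Verma k n) : (2 : D k) • m = (2 : k) • m := by
  rw [show ((2 : D k)) = ((2 : ℤ) : D k) by norm_num, int_smul]
  norm_num

lemma xi_smul_wm : ∀ i j, Dxi k • wm k n i j = ((n - 2 * (i + j : ℕ) : ℤ) : k) • wm k n i j := by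
  have base : ∀ j, Dxi k • wm k n 0 j = ((n - 2 * (j : ℕ) : ℤ) : k) • wm k n 0 j := by
    intro j
    induction j with
    | zero =>
      rw [wm_zero, hxi_z]
      norm_num
    | succ j IH =>
      rw [wm_xsucc, ← mul_smul, rel_xix, sub_smul, mul_smul, mul_smul, IH, smul_comm' n,
        two_smul' n, ← wm_xsucc]
      have hc : ((n - 2 * ((j + 1 : ℕ) : ℤ) : ℤ) : k) = ((n - 2 * ((j : ℕ) : ℤ) : ℤ) : k) - 2 := by
        push_cast; ring
      rw [hc]
      module
  intro i
  induction i with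
  | zero =>
    intro j
    simpa using base j
  | succ i IH =>
    intro j
    rw [wm_ysucc, ← mul_smul, rel_xiy, sub_smul, mul_smul, mul_smul, IH, smul_comm' n,
      two_smul' n, ← wm_ysucc]
    have hc : ((n - 2 * ((i + 1 + j : ℕ) : ℤ) : ℤ) : k)
        = ((n - 2 * ((i + j : ℕ) : ℤ) : ℤ) : k) - 2 := by
      push_cast; ring
    rw [hc]
    module

lemma x_map_Tot : ∀ w ∈ Tot k n, Dx k • w ∈ Tot k n := by
  apply smul_span_le
  rintro w ⟨i, j, rfl⟩
  exact Ti_le_Tot n (i + 1) (x_smul_wm n i j)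

lemma y_map_Tot : ∀ w ∈ Tot k n, Dy k • w ∈ Tot k n := by
  apply smul_span_le
  rintro w ⟨i, j, rfl⟩
  rw [← wm_ysucc]
  exact wm_mem_Tot n (i + 1) j

lemma g_smul_wm_mem_Tot (i j : ℕ) : Dg k • wm k n i j ∈ Tot k n := by
  have h : Dg k • wm k n i j = (Dg k - 1) • wm k n i j + wm k n i j := by
    rw [sub_smul, one_smul, sub_add_cancel]
  rw [h]
  exact Submodule.add_mem _ (Ti_le_Tot n i (g_smul_wm n i j)) (wm_mem_Tot n i j)

lemma g_map_Tot : ∀ w ∈ Tot k n, Dg k • w ∈ Tot k n := by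
  apply smul_span_le
  rintro w ⟨i, j, rfl⟩
  exact g_smul_wm_mem_Tot n i j

lemma xi_map_Tot : ∀ w ∈ Tot k n, Dxi k • w ∈ Tot k n := by
  apply smul_span_le
  rintro w ⟨i, j, rfl⟩
  rw [xi_smul_wm]
  exact Submodule.smul_mem _ _ (wm_mem_Tot n i j)

lemma u_smul_wm : ∀ i j, Du k • wm k n i j ∈ Tot k n := by
  intro i
  induction i with
  | zero =>
    intro j
    have : Du k • wm k n 0 j = 0 := by
      rw [wm_x, ← mul_smul, (Commute.pow_right (rel_ux (k := k)) j).eq, mul_smul,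
        hu_z, smul_zero]
    rw [this]
    exact Submodule.zero_mem _
  | succ i IH =>
    intro j
    have key : Du k • wm k n (i + 1) j
        = Dy k • (Du k • wm k n i j) + wm k n i j - Dg k • wm k n i j := by
      rw [wm_ysucc, ← mul_smul, rel_uy, add_smul, mul_smul, sub_smul, one_smul]
      abel
    rw [key]
    exact Submodule.sub_mem _
      (Submodule.add_mem _ (y_map_Tot n _ (IH j)) (wm_mem_Tot n i j))
      (g_smul_wm_mem_Tot n i j)

lemma u_map_Tot : ∀ w ∈ Tot k n, Du k • w ∈ Tot k n := by
  apply smul_span_le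
  rintro w ⟨i, j, rfl⟩
  exact u_smul_wm n i j

lemma v_smul_wm : ∀ i j, Dv k • wm k n i j ∈ Tot k n := by
  intro i
  induction i with
  | zero =>
    intro j
    induction j with
    | zero =>
      rw [wm_zero, hv_z]
      exact Submodule.zero_mem _
    | succ j IH =>
      have key : Dv k • wm k n 0 (j + 1)
          = Dx k • (Dv k • wm k n 0 j) + wm k n 0 j - Dg k • wm k n 0 j
            + Dx k • (Du k • wm k n 0 j) := by
        rw [wm_xsucc, ← mul_smul, rel_vx, add_smul, add_smul, mul_smul, mul_smul,
          sub_smul, one_smul]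
        abel
      rw [key]
      exact Submodule.add_mem _
        (Submodule.sub_mem _
          (Submodule.add_mem _ (x_map_Tot n _ IH) (wm_mem_Tot n 0 j))
          (g_smul_wm_mem_Tot n 0 j))
        (x_map_Tot n _ (u_smul_wm n 0 j))
  | succ i IH =>
    intro j
    have key : Dv k • wm k n (i + 1) j
        = Dy k • (Dv k • wm k n i j) + (1 / 2 : k) • (Dg k • (Dxi k • wm k n i j))
          + Dy k • (Du k • wm k n i j) := by
      rw [wm_ysucc, ← mul_smul, rel_vy, add_smul, add_smul, mul_smul, mul_smul,
        smul_assoc, mul_smul]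
    rw [key]
    refine Submodule.add_mem _ (Submodule.add_mem _ (y_map_Tot n _ (IH j)) ?_)
      (y_map_Tot n _ (u_smul_wm n i j))
    exact Submodule.smul_mem _ _ (g_map_Tot n _ (xi_map_Tot n _ (wm_mem_Tot n i j)))

lemma v_map_Tot : ∀ w ∈ Tot k n, Dv k • w ∈ Tot k n := by
  apply smul_span_le
  rintro w ⟨i, j, rfl⟩
  exact v_smul_wm n i j

lemma gi_smul_wm : ∀ i j, Dginv k • wm k n i j ∈ Tot k n := by
  intro i
  induction i with
  | zero =>
    intro j
    have : Dginv k • wm k n 0 j = wm k n 0 j := by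
      rw [wm_x, ← mul_smul, (Commute.pow_right (rel_gix (k := k)) j).eq, mul_smul, hgi_z]
    rw [this]
    exact wm_mem_Tot n 0 j
  | succ i IH =>
    intro j
    have key : Dginv k • wm k n (i + 1) j
        = Dy k • (Dginv k • wm k n i j) - Dx k • (Dginv k • wm k n i j) := by
      rw [wm_ysucc, ← mul_smul, rel_giy, sub_smul, mul_smul, mul_smul]
    rw [key]
    exact Submodule.sub_mem _ (y_map_Tot n _ (IH j)) (x_map_Tot n _ (IH j))

lemma gi_map_Tot : ∀ w ∈ Tot k n, Dginv k • w ∈ Tot k n := by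
  apply smul_span_le
  rintro w ⟨i, j, rfl⟩
  exact gi_smul_wm n i j

lemma d_map_Tot (d : D k) : ∀ w ∈ Tot k n, d • w ∈ Tot k n := by
  obtain ⟨f, rfl⟩ := RingQuot.mkAlgHom_surjective k (DRel k) d
  induction f using FreeAlgebra.induction with
  | grade0 r =>
    intro w hw
    rw [AlgHom.commutes, algebraMap_smul]
    exact Submodule.smul_mem _ _ hw
  | grade1 gen =>
    cases gen with
    | u => exact u_map_Tot n
    | v => exact v_map_Tot n
    | xi => exact xi_map_Tot n
    | g => exact g_map_Tot n
    | ginv => exact gi_map_Tot n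
    | x => exact x_map_Tot n
    | y => exact y_map_Tot n
  | mul a b iha ihb =>
    intro w hw
    rw [map_mul, mul_smul]
    exact iha _ (ihb _ hw)
  | add a b iha ihb =>
    intro w hw
    rw [map_add, add_smul]
    exact Submodule.add_mem _ (iha _ hw) (ihb _ hw)

lemma Tot_eq_top : Tot k n = ⊤ := by
  rw [eq_top_iff]
  intro m _
  obtain ⟨d, rfl⟩ := Submodule.Quotient.mk_surjective (vermaIdeal k n) m
  have h : (Submodule.Quotient.mk d : Verma k n) = d • vermaGen k n := by
    unfold vermaGen
    rw [← Submodule.Quotient.mk_smul, smul_eq_mul, mul_one]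
  rw [h, ← wm_zero n]
  exact d_map_Tot n d _ (wm_mem_Tot n 0 0)

lemma Ti_zero : Ti k n 0 = ⊥ := by
  rw [Ti, Submodule.span_eq_bot]
  rintro x ⟨i', j, hi', rfl⟩
  omega

lemma g_nil : ∀ i, ∀ m ∈ Ti k n i, (Dg k - 1) ^ i • m = 0 := by
  intro i
  induction i with
  | zero =>
    intro m hm
    rw [Ti_zero, Submodule.mem_bot] at hm
    rw [pow_zero, one_smul, hm]
  | succ i IH =>
    intro m hm
    induction hm using Submodule.span_induction with
    | mem w hw =>
      obtain ⟨i', j, hi', rfl⟩ := hw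
      rw [pow_succ, mul_smul]
      exact IH _ (Ti_mono n (by omega) (g_smul_wm n i' j))
    | zero => rw [smul_zero]
    | add a b _ _ ha hb => rw [smul_add, ha, hb, add_zero]
    | smul c a _ ha =>
      rw [smul_comm' n, ha]
      module

lemma wm_mem_wt (c i j : ℕ) (h : i + j = c) :
    wm k n i j ∈ wt (k := k) (Verma k n) (n - 2 * c) := by
  subst h
  refine ⟨⟨1, ?_⟩, ⟨i + 1, ?_⟩⟩
  · rw [pow_one, sub_smul, int_smul, xi_smul_wm, sub_self]
  · rw [pow_succ, mul_smul]
    exact g_nil n i _ (g_smul_wm n i j)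

variable (k) in
/-- The action of `D k` by `k`-linear endomorphisms. -/
def LL : D k →ₐ[k] Module.End k (Verma k n) := Algebra.lsmul k k (Verma k n)

lemma LL_apply (d : D k) (m : Verma k n) : LL k n d m = d • m := rfl

set_option maxHeartbeats 1000000 in
lemma LL_int (m : ℤ) : LL k n ((m : D k)) = ((m : k)) • (1 : Module.End k (Verma k n)) := by
  apply LinearMap.ext
  intro w
  rw [LinearMap.smul_apply, Module.End.one_apply, LL_apply, int_smul]

variable (k) in
/-- Generalized eigenspace of the `ξ`-action with eigenvalue `n - 2c`. -/
def GE (c : ℕ) : Submodule k (Verma k n) :=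
  (LL k n (Dxi k)).maxGenEigenspace ((n - 2 * (c : ℤ) : ℤ) : k)

lemma LL_sub (c : ℕ) : LL k n (Dxi k) - ((n - 2 * (c : ℤ) : ℤ) : k) • 1
    = LL k n (Dxi k - ((n - 2 * (c : ℤ) : ℤ) : D k)) := by
  rw [map_sub, LL_int]

lemma wt_le_GE (c : ℕ) : wt (k := k) (Verma k n) (n - 2 * c) ≤ GE k n c := by
  rintro m ⟨⟨a, ha⟩, -⟩
  rw [GE, Module.End.mem_maxGenEigenspace]
  refine ⟨a, ?_⟩
  rw [LL_sub, ← map_pow, LL_apply, ha]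

lemma SC_le_GE (c : ℕ) : SC k n c ≤ GE k n c := by
  rw [SC, Submodule.span_le]
  rintro w ⟨i, j, hij, rfl⟩
  rw [SetLike.mem_coe, GE, Module.End.mem_maxGenEigenspace]
  refine ⟨1, ?_⟩
  rw [pow_one, LinearMap.sub_apply, LinearMap.smul_apply, Module.End.one_apply, LL_apply]
  rw [show ((Dy k ^ i * Dx k ^ j) • vermaGen k n) = wm k n i j from rfl, xi_smul_wm, ← hij]
  push_cast
  rw [sub_self]

lemma SC_le_wt (c : ℕ) : SC k n c ≤ wt (k := k) (Verma k n) (n - 2 * c) := by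
  rw [SC, Submodule.span_le]
  rintro w ⟨i, j, hij, rfl⟩
  exact wm_mem_wt n c i j hij

lemma iSup_SC : (⨆ c : ℕ, SC k n c) = ⊤ := by
  have h : Tot k n = ⨆ c : ℕ, SC k n c := by
    rw [Tot, show {w | ∃ i j, w = wm k n i j}
        = ⋃ c : ℕ, {w : Verma k n | ∃ i j : ℕ, i + j = c
          ∧ w = (Dy k ^ i * Dx k ^ j) • vermaGen k n} by
      ext w
      simp only [Set.mem_iUnion, Set.mem_setOf_eq]
      constructor
      · rintro ⟨i, j, rfl⟩
        exact ⟨i + j, i, j, rfl, rfl⟩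
      · rintro ⟨c, i, j, _, hw⟩
        exact ⟨i, j, hw⟩]
    rw [Submodule.span_iUnion]
    rfl
  rw [← h, Tot_eq_top]

lemma GE_indep [CharZero k] : iSupIndep (fun c : ℕ => GE k n c) := by
  have h := Module.End.independent_maxGenEigenspace (LL k n (Dxi k))
  refine h.comp (f := fun c : ℕ => ((n - 2 * (c : ℤ) : ℤ) : k)) ?_
  intro a b hab
  simp only [] at hab
  have h2 : ((n - 2 * (a : ℤ)) : ℤ) = ((n - 2 * (b : ℤ)) : ℤ) := by
    have := Int.cast_injective (α := k) hab
    omega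
  omega

lemma GE_le_SC [CharZero k] (c : ℕ) : GE k n c ≤ SC k n c := by
  intro m hm
  set X : Submodule k (Verma k n) := ⨆ d : ℕ, ⨆ _ : d ≠ c, SC k n d with hX
  have hmem : m ∈ SC k n c ⊔ X := by
    have hm' : m ∈ (⨆ d : ℕ, SC k n d) := by rw [iSup_SC]; trivial
    refine (iSup_le fun d => ?_ : (⨆ d : ℕ, SC k n d) ≤ SC k n c ⊔ X) hm'
    by_cases hd : d = c
    · subst hd; exact le_sup_left
    · exact le_trans (le_iSup₂ (f := fun d (_ : d ≠ c) => SC k n d) d hd) le_sup_right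
  have hdis : X ⊓ GE k n c = ⊥ := by
    have h1 : Disjoint (GE k n c) (⨆ d : ℕ, ⨆ _ : d ≠ c, GE k n d) :=
      iSupIndep_def.mp (GE_indep n) c
    have h2 : X ≤ ⨆ d : ℕ, ⨆ _ : d ≠ c, GE k n d := by
      rw [hX]
      exact iSup_mono fun d => iSup_mono' fun hd => ⟨hd, SC_le_GE n d⟩
    rw [← le_bot_iff]
    calc X ⊓ GE k n c ≤ (⨆ d : ℕ, ⨆ _ : d ≠ c, GE k n d) ⊓ GE k n c :=
          inf_le_inf_right _ h2
      _ = ⊥ := by rw [inf_comm]; exact h1.eq_bot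
  have hmod : (SC k n c ⊔ X) ⊓ GE k n c = SC k n c ⊔ (X ⊓ GE k n c) :=
    sup_inf_assoc_of_le _ (SC_le_GE n c)
  have : m ∈ (SC k n c ⊔ X) ⊓ GE k n c := ⟨hmem, hm⟩
  rw [hmod, hdis, sup_bot_eq] at this
  exact this

end Module

end VermaSix


/-- For every `n ∈ ℤ` and `c ∈ ℕ₀`, the weight subspace `M(n)^{(n−2c)}`
of the Verma module `M(n)` is the linear span of the elements `yⁱxʲ·z_n` with `i + j = c`,
and `M(n)` is the direct sum of the weight subspaces `M(n)^{(n−2c)}`, `c ∈ ℕ₀`. -/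
theorem verma_weight_spaces (k : Type) [Field k] [IsAlgClosed k] [CharZero k] (n : ℤ) :
    (∀ c : ℕ, wt (k := k) (Verma k n) (n - 2 * c) =
      Submodule.span k {w : Verma k n |
        ∃ i j : ℕ, i + j = c ∧ w = (Dy k ^ i * Dx k ^ j) • vermaGen k n}) ∧
    DirectSum.IsInternal (fun c : ℕ => wt (k := k) (Verma k n) (n - 2 * c)) := by
  open VermaSix in
  have heq : ∀ c : ℕ, wt (k := k) (Verma k n) (n - 2 * c) = SC k n c := fun c =>
    le_antisymm (le_trans (wt_le_GE n c) (GE_le_SC n c)) (SC_le_wt n c)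
  constructor
  · exact fun c => heq c
  · rw [DirectSum.isInternal_submodule_iff_iSupIndep_and_iSup_eq_top]
    constructor
    · rw [show (fun c : ℕ => wt (k := k) (Verma k n) (n - 2 * c)) = fun c => SC k n c from
        funext heq]
      exact (GE_indep n).mono fun c => SC_le_GE n c
    · rw [show (fun c : ℕ => wt (k := k) (Verma k n) (n - 2 * c)) = fun c => SC k n c from
        funext heq]
      exact iSup_SC n
end
end

section
/- For all n, m ∈ ℕ₀, the set {y^i x^j·z : 0 ≤ j ≤ m, 0 ≤ i ≤ n + 2(m−j)} is a k-basis of T(n,m); in particular dim_k T(n,m) = (m+1)(n+m+1). -/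
/-!
We formalize the double of the Jordan plane `𝒟` (Andruskiewitsch–Peña Pollastri) as the
quotient of the free algebra on generators `u, v, ξ, g, g⁻¹, x, y` by the defining relations.
-/

noncomputable section

open FreeAlgebra

variable (k : Type) [Field k]

variable {k}

variable (k) in
/-- The left ideal `J(n,m)` of `𝒟`, generated by `g − 1`, `ξ − (n+2m)`, `u`, `v`,
`x^{m+1}` and `y^{n+2(m−j)+1}xʲ` for `0 ≤ j ≤ m`. -/
def Jideal (n m : ℕ) : Submodule (D k) (D k) :=
  Submodule.span (D k)
    ({Dg k - 1, Dxi k - ((n + 2 * m : ℕ) : D k), Du k, Dv k, Dx k ^ (m + 1)} ∪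
      {w : D k | ∃ j ≤ m, w = Dy k ^ (n + 2 * (m - j) + 1) * Dx k ^ j})

variable (k) in
/-- The uniserial `𝒟`-module `T(n,m) = 𝒟/J(n,m)`. -/
abbrev Tmod (n m : ℕ) : Type := D k ⧸ Jideal k n m

variable (k) in
/-- The generator `z ∈ T(n,m)`, the image of `1`. -/
def Tgen (n m : ℕ) : Tmod k n m := Submodule.Quotient.mk 1


namespace TB
variable {k : Type} [Field k]

abbrev Vi (k : Type) [Field k] : Type := (ℕ × ℕ) →₀ k

variable (k)

/-- basis vector of the model, `fb (i,j) ~ xʲ yⁱ z`. -/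
def fb (p : ℕ × ℕ) : Vi k := Finsupp.single p 1

def opOf (F : ℕ × ℕ → Vi k) : Module.End k (Vi k) :=
  Finsupp.lsum k fun p => LinearMap.toSpanSingleton k (Vi k) (F p)

variable {k}

lemma opOf_single (F : ℕ × ℕ → Vi k) (p : ℕ × ℕ) (c : k) :
    opOf k F (Finsupp.single p c) = c • F p := by
  simp [opOf, LinearMap.toSpanSingleton_apply]

lemma opOf_fb (F : ℕ × ℕ → Vi k) (p : ℕ × ℕ) : opOf k F (fb k p) = F p := by
  simp [fb, opOf_single]

lemma single_eq_smul_fb (p : ℕ × ℕ) (c : k) : Finsupp.single p c = c • fb k p := by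
  simp [fb, Finsupp.smul_single]

lemma end_ext {f g : Module.End k (Vi k)} (h : ∀ p, f (fb k p) = g (fb k p)) : f = g :=
  Finsupp.lhom_ext fun p c => by rw [single_eq_smul_fb, map_smul, map_smul, h]

lemma end_ext' {f g : Module.End k (Vi k)} (h : ∀ p, f (fb k p) = g (fb k p)) (w : Vi k) :
    f w = g w := DFunLike.congr_fun (end_ext h) w

lemma pow_succ_apply {M : Type} [AddCommGroup M] [Module k M]
    (A : Module.End k M) (j : ℕ) (w : M) :
    (A ^ (j + 1)) w = A ((A ^ j) w) := by
  rw [pow_succ', Module.End.mul_apply]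

variable (k)

def Xo : Module.End k (Vi k) := opOf k fun p => fb k (p.1, p.2 + 1)

def Yo : Module.End k (Vi k) :=
  opOf k fun p => fb k (p.1 + 1, p.2) - ((p.2 : k) / 2) • fb k (p.1, p.2 + 1)

variable (lam : k)

def Xio : Module.End k (Vi k) := opOf k fun p => (lam - 2 * ((p.1 : k) + (p.2 : k))) • fb k p

def Go : Module.End k (Vi k) :=
  opOf k fun p => (Xo k ^ p.2) (((Yo k + Xo k) ^ p.1) (fb k (0, 0)))

def Gio : Module.End k (Vi k) :=
  opOf k fun p => (Xo k ^ p.2) (((Yo k - Xo k) ^ p.1) (fb k (0, 0)))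

def Usub : ℕ → Vi k := fun i =>
  Nat.rec 0 (fun i ih => Yo k ih + fb k (i, 0) - Go k (fb k (i, 0))) i

def Uo : Module.End k (Vi k) := opOf k fun p => (Xo k ^ p.2) (Usub k p.1)

def V0 : ℕ → Vi k := fun i =>
  Nat.rec 0 (fun i ih =>
    Yo k ih + (1 / 2 : k) • Go k (Xio k lam (fb k (i, 0))) + Yo k (Uo k (fb k (i, 0)))) i

def Vsub (i : ℕ) : ℕ → Vi k := fun j =>
  Nat.rec (V0 k lam i) (fun j ih =>
    Xo k ih + fb k (i, j) - Go k (fb k (i, j)) + Xo k (Uo k (fb k (i, j)))) j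

def Vop : Module.End k (Vi k) := opOf k fun p => Vsub k lam p.1 p.2

variable {k lam}

@[simp] lemma Xo_fb (i j : ℕ) : Xo k (fb k (i, j)) = fb k (i, j + 1) := opOf_fb _ _

@[simp] lemma Yo_fb (i j : ℕ) :
    Yo k (fb k (i, j)) = fb k (i + 1, j) - ((j : k) / 2) • fb k (i, j + 1) := opOf_fb _ _

@[simp] lemma Xio_fb (i j : ℕ) :
    Xio k lam (fb k (i, j)) = (lam - 2 * ((i : k) + (j : k))) • fb k (i, j) := opOf_fb _ _

lemma Go_fb (i j : ℕ) :
    Go k (fb k (i, j)) = (Xo k ^ j) (((Yo k + Xo k) ^ i) (fb k (0, 0))) := opOf_fb _ _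

lemma Gio_fb (i j : ℕ) :
    Gio k (fb k (i, j)) = (Xo k ^ j) (((Yo k - Xo k) ^ i) (fb k (0, 0))) := opOf_fb _ _

lemma Uo_fb (i j : ℕ) : Uo k (fb k (i, j)) = (Xo k ^ j) (Usub k i) := opOf_fb _ _

lemma Vop_fb (i j : ℕ) : Vop k lam (fb k (i, j)) = Vsub k lam i j := opOf_fb _ _

@[simp] lemma Usub_zero : Usub k 0 = 0 := rfl
lemma Usub_succ (i : ℕ) :
    Usub k (i + 1) = Yo k (Usub k i) + fb k (i, 0) - Go k (fb k (i, 0)) := rfl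
@[simp] lemma V0_zero : V0 k lam 0 = 0 := rfl
lemma V0_succ (i : ℕ) :
    V0 k lam (i + 1) = Yo k (V0 k lam i) + (1 / 2 : k) • Go k (Xio k lam (fb k (i, 0)))
      + Yo k (Uo k (fb k (i, 0))) := rfl
lemma Vsub_zero (i : ℕ) : Vsub k lam i 0 = V0 k lam i := rfl
lemma Vsub_succ (i j : ℕ) :
    Vsub k lam i (j + 1) = Xo k (Vsub k lam i j) + fb k (i, j) - Go k (fb k (i, j))
      + Xo k (Uo k (fb k (i, j))) := rfl

/-- `y x = x y - (1/2) x²` pointwise. -/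
lemma yX (w : Vi k) : Yo k (Xo k w) = Xo k (Yo k w) - (1 / 2 : k) • Xo k (Xo k w) := by
  refine end_ext' (f := Yo k * Xo k)
    (g := Xo k * Yo k - (1 / 2 : k) • (Xo k * Xo k)) (fun p => ?_) w
  obtain ⟨i, j⟩ := p
  simp only [Module.End.mul_apply, LinearMap.sub_apply, LinearMap.smul_apply, Xo_fb, Yo_fb,
    map_sub, map_smul]
  push_cast
  module

lemma pow_succ_apply' {M : Type} [AddCommGroup M] [Module k M]
    (A : Module.End k M) (j : ℕ) (w : M) :
    (A ^ (j + 1)) w = (A ^ j) (A w) := by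
  rw [pow_succ, Module.End.mul_apply]

lemma yXpow (j : ℕ) (w : Vi k) :
    Yo k ((Xo k ^ j) w) = (Xo k ^ j) (Yo k w) - ((j : k) / 2) • (Xo k ^ (j + 1)) w := by
  induction j generalizing w with
  | zero => simp
  | succ j ih =>
    simp only [pow_succ_apply']
    rw [ih (Xo k w), yX]
    simp only [map_sub, map_smul, pow_succ_apply']
    push_cast
    module

lemma pow_shift_apply (A : Module.End k (Vi k)) (j : ℕ) (w : Vi k) :
    A ((A ^ j) w) = (A ^ j) (A w) := by
  rw [← pow_succ_apply, pow_succ_apply']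

lemma gX (w : Vi k) : Go k (Xo k w) = Xo k (Go k w) := by
  refine end_ext' (f := Go k * Xo k) (g := Xo k * Go k) (fun ⟨i, j⟩ => ?_) w
  simp only [Module.End.mul_apply, Xo_fb, Go_fb, pow_succ_apply]

lemma giX (w : Vi k) : Gio k (Xo k w) = Xo k (Gio k w) := by
  refine end_ext' (f := Gio k * Xo k) (g := Xo k * Gio k) (fun ⟨i, j⟩ => ?_) w
  simp only [Module.End.mul_apply, Xo_fb, Gio_fb, pow_succ_apply]

lemma uX (w : Vi k) : Uo k (Xo k w) = Xo k (Uo k w) := by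
  refine end_ext' (f := Uo k * Xo k) (g := Xo k * Uo k) (fun ⟨i, j⟩ => ?_) w
  simp only [Module.End.mul_apply, Xo_fb, Uo_fb, pow_succ_apply]

lemma vX (w : Vi k) :
    Vop k lam (Xo k w) = Xo k (Vop k lam w) + w - Go k w + Xo k (Uo k w) := by
  refine end_ext' (f := Vop k lam * Xo k)
    (g := Xo k * Vop k lam + 1 - Go k + Xo k * Uo k) (fun ⟨i, j⟩ => ?_) w
  simp only [Module.End.mul_apply, LinearMap.add_apply, LinearMap.sub_apply, Module.End.one_apply,
    Xo_fb, Vop_fb, Vsub_succ]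

lemma y0 (i : ℕ) : Yo k (fb k (i, 0)) = fb k (i + 1, 0) := by
  simp

lemma fb_x (i j : ℕ) : (Xo k ^ j) (fb k (i, 0)) = fb k (i, j) := by
  induction j with
  | zero => simp
  | succ j ih => rw [pow_succ_apply, ih, Xo_fb]

lemma fb_y (i : ℕ) : (Yo k ^ i) (fb k (0, 0)) = fb k (i, 0) := by
  induction i with
  | zero => simp
  | succ i ih => rw [pow_succ_apply, ih, y0]

lemma fb_eq (i j : ℕ) : fb k (i, j) = (Xo k ^ j) ((Yo k ^ i) (fb k (0, 0))) := by
  rw [fb_y, fb_x]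

lemma Go_fb00 : Go k (fb k (0, 0)) = fb k (0, 0) := by
  rw [Go_fb]; simp

lemma Gio_fb00 : Gio k (fb k (0, 0)) = fb k (0, 0) := by
  rw [Gio_fb]; simp

lemma gY (w : Vi k) : Go k (Yo k w) = Yo k (Go k w) + Xo k (Go k w) := by
  refine end_ext' (f := Go k * Yo k) (g := Yo k * Go k + Xo k * Go k) (fun ⟨i, j⟩ => ?_) w
  simp only [Module.End.mul_apply, LinearMap.add_apply, Yo_fb, Go_fb, map_sub, map_smul]
  rw [yXpow, pow_succ_apply (Yo k + Xo k), pow_shift_apply (Xo k)]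
  simp only [LinearMap.add_apply, map_add]
  module

lemma giY (w : Vi k) : Gio k (Yo k w) = Yo k (Gio k w) - Xo k (Gio k w) := by
  refine end_ext' (f := Gio k * Yo k) (g := Yo k * Gio k - Xo k * Gio k) (fun ⟨i, j⟩ => ?_) w
  simp only [Module.End.mul_apply, LinearMap.sub_apply, Yo_fb, Gio_fb, map_sub, map_smul]
  rw [yXpow, pow_succ_apply (Yo k - Xo k), pow_shift_apply (Xo k)]
  simp only [LinearMap.sub_apply, map_sub]
  module

lemma xiX (w : Vi k) : Xio k lam (Xo k w) = Xo k (Xio k lam w) - (2 : k) • Xo k w := by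
  refine end_ext' (f := Xio k lam * Xo k)
    (g := Xo k * Xio k lam - (2 : k) • Xo k) (fun ⟨i, j⟩ => ?_) w
  simp only [Module.End.mul_apply, LinearMap.sub_apply, LinearMap.smul_apply, Xo_fb, Xio_fb,
    map_smul]
  push_cast
  module

lemma xiY (w : Vi k) : Xio k lam (Yo k w) = Yo k (Xio k lam w) - (2 : k) • Yo k w := by
  refine end_ext' (f := Xio k lam * Yo k)
    (g := Yo k * Xio k lam - (2 : k) • Yo k) (fun ⟨i, j⟩ => ?_) w
  simp only [Module.End.mul_apply, LinearMap.sub_apply, LinearMap.smul_apply, Yo_fb, Xio_fb,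
    map_smul, map_sub]
  push_cast
  module

lemma xiXpow (j : ℕ) (w : Vi k) :
    Xio k lam ((Xo k ^ j) w) = (Xo k ^ j) (Xio k lam w) - (2 * (j : k)) • (Xo k ^ j) w := by
  induction j generalizing w with
  | zero => simp
  | succ j ih =>
    simp only [pow_succ_apply']
    rw [ih (Xo k w), xiX]
    simp only [map_sub, map_smul, pow_succ_apply']
    push_cast
    module

lemma xiYXpow (i : ℕ) (w : Vi k) :
    Xio k lam (((Yo k + Xo k) ^ i) w)
      = ((Yo k + Xo k) ^ i) (Xio k lam w) - (2 * (i : k)) • ((Yo k + Xo k) ^ i) w := by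
  induction i generalizing w with
  | zero => simp
  | succ i ih =>
    simp only [pow_succ_apply', ih]
    simp only [LinearMap.add_apply, map_add, map_sub, map_smul, xiX, xiY]
    push_cast
    module

lemma Xio_fb00 : Xio k lam (fb k (0, 0)) = lam • fb k (0, 0) := by
  rw [Xio_fb]; norm_num
lemma xiG (w : Vi k) : Xio k lam (Go k w) = Go k (Xio k lam w) := by
  refine end_ext' (f := Xio k lam * Go k) (g := Go k * Xio k lam) (fun ⟨i, j⟩ => ?_) w
  simp only [Module.End.mul_apply, Xio_fb, map_smul, Go_fb]
  rw [xiXpow, xiYXpow, Xio_fb00]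
  simp only [map_sub, map_smul]
  module

lemma gXpow (j : ℕ) (w : Vi k) : Go k ((Xo k ^ j) w) = (Xo k ^ j) (Go k w) := by
  induction j generalizing w with
  | zero => simp
  | succ j ih => rw [pow_succ_apply', ih, gX, ← pow_succ_apply']

lemma giXpow (j : ℕ) (w : Vi k) : Gio k ((Xo k ^ j) w) = (Xo k ^ j) (Gio k w) := by
  induction j generalizing w with
  | zero => simp
  | succ j ih => rw [pow_succ_apply', ih, giX, ← pow_succ_apply']

lemma uXpow (j : ℕ) (w : Vi k) : Uo k ((Xo k ^ j) w) = (Xo k ^ j) (Uo k w) := by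
  induction j generalizing w with
  | zero => simp
  | succ j ih => rw [pow_succ_apply', ih, uX, ← pow_succ_apply']

lemma gYmX (w : Vi k) : Go k (Yo k w - Xo k w) = Yo k (Go k w) := by
  rw [map_sub, gY, gX]; abel

lemma giYpX (w : Vi k) : Gio k (Yo k w + Xo k w) = Yo k (Gio k w) := by
  rw [map_add, giY, giX]; abel

lemma gYmXpow (i : ℕ) (w : Vi k) :
    Go k (((Yo k - Xo k) ^ i) w) = (Yo k ^ i) (Go k w) := by
  induction i generalizing w with
  | zero => simp
  | succ i ih =>
    rw [pow_succ_apply', ih, LinearMap.sub_apply, gYmX, ← pow_succ_apply']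

lemma giYpXpow (i : ℕ) (w : Vi k) :
    Gio k (((Yo k + Xo k) ^ i) w) = (Yo k ^ i) (Gio k w) := by
  induction i generalizing w with
  | zero => simp
  | succ i ih =>
    rw [pow_succ_apply', ih, LinearMap.add_apply, giYpX, ← pow_succ_apply']

lemma gGi (w : Vi k) : Go k (Gio k w) = w := by
  refine end_ext' (f := Go k * Gio k) (g := 1) (fun ⟨i, j⟩ => ?_) w
  simp only [Module.End.mul_apply, Module.End.one_apply, Gio_fb]
  rw [gXpow, gYmXpow, Go_fb00, ← fb_eq]

lemma giG (w : Vi k) : Gio k (Go k w) = w := by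
  refine end_ext' (f := Gio k * Go k) (g := 1) (fun ⟨i, j⟩ => ?_) w
  simp only [Module.End.mul_apply, Module.End.one_apply, Go_fb]
  rw [giXpow, giYpXpow, Gio_fb00, ← fb_eq]

lemma Go_fb_i0 (i : ℕ) : Go k (fb k (i, 0)) = ((Yo k + Xo k) ^ i) (fb k (0, 0)) := by
  rw [Go_fb, pow_zero, Module.End.one_apply]

lemma Uo_fb_i0 (i : ℕ) : Uo k (fb k (i, 0)) = Usub k i := by
  rw [Uo_fb, pow_zero, Module.End.one_apply]

lemma Vop_fb00 : Vop k lam (fb k (0, 0)) = 0 := by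
  rw [Vop_fb, Vsub_zero, V0_zero]

lemma Uo_fb00 : Uo k (fb k (0, 0)) = 0 := by
  rw [Uo_fb_i0, Usub_zero]

lemma uY (w : Vi k) : Uo k (Yo k w) = Yo k (Uo k w) + w - Go k w := by
  refine end_ext' (f := Uo k * Yo k) (g := Yo k * Uo k + 1 - Go k) (fun ⟨i, j⟩ => ?_) w
  simp only [Module.End.mul_apply, LinearMap.add_apply, LinearMap.sub_apply, Module.End.one_apply,
    Yo_fb, map_sub, map_smul, Uo_fb, Usub_succ, Go_fb_i0, Go_fb, yXpow, pow_zero]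
  rw [← fb_x i j]
  simp only [map_add, map_sub]
  module

lemma uGaux (i : ℕ) :
    Uo k (((Yo k + Xo k) ^ i) (fb k (0, 0))) = Go k (Usub k i) := by
  induction i with
  | zero => rw [pow_zero, Module.End.one_apply, Usub_zero, map_zero, Uo_fb00]
  | succ i ih =>
    rw [pow_succ_apply, LinearMap.add_apply, map_add, uY, uX, ih, Usub_succ]
    simp only [map_add, map_sub, gY]
    rw [← Go_fb_i0]
    abel

lemma uG (w : Vi k) : Uo k (Go k w) = Go k (Uo k w) := by
  refine end_ext' (f := Uo k * Go k) (g := Go k * Uo k) (fun ⟨i, j⟩ => ?_) w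
  simp only [Module.End.mul_apply, Go_fb, Uo_fb]
  rw [uXpow, uGaux, ← gXpow]

lemma xiU (i : ℕ) : Xio k lam (Usub k i) = (lam - 2 * (i : k) + 2) • Usub k i := by
  induction i with
  | zero => simp
  | succ i ih =>
    rw [Usub_succ]
    simp only [map_add, map_sub, xiY, xiG, Xio_fb, map_smul, ih]
    push_cast
    match_scalars <;> ring

lemma uXi (w : Vi k) :
    Uo k (Xio k lam w) = Xio k lam (Uo k w) - (2 : k) • Uo k w := by
  refine end_ext' (f := Uo k * Xio k lam)
    (g := Xio k lam * Uo k - (2 : k) • Uo k) (fun ⟨i, j⟩ => ?_) w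
  simp only [Module.End.mul_apply, LinearMap.sub_apply, LinearMap.smul_apply, Xio_fb, map_smul,
    Uo_fb]
  rw [xiXpow, xiU, map_smul]
  push_cast
  module

variable [CharZero k]

lemma vY_fb (j i : ℕ) :
    Vop k lam (Yo k (fb k (i, j))) = Yo k (Vop k lam (fb k (i, j)))
      + (1 / 2 : k) • Go k (Xio k lam (fb k (i, j))) + Yo k (Uo k (fb k (i, j))) := by
  induction j generalizing i with
  | zero =>
    rw [y0, Vop_fb, Vop_fb, Vsub_zero, Vsub_zero, V0_succ]
  | succ j ih =>
    rw [← Xo_fb]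
    simp only [yX, vX, uX, gX, gY, uY, xiX, map_add, map_sub, map_smul, ih]
    match_scalars <;> first | norm_num | ring

lemma vY (w : Vi k) :
    Vop k lam (Yo k w) = Yo k (Vop k lam w)
      + (1 / 2 : k) • Go k (Xio k lam w) + Yo k (Uo k w) := by
  refine end_ext' (f := Vop k lam * Yo k)
    (g := Yo k * Vop k lam + (1 / 2 : k) • (Go k * Xio k lam) + Yo k * Uo k)
    (fun ⟨i, j⟩ => ?_) w
  simpa only [Module.End.mul_apply, LinearMap.add_apply, LinearMap.smul_apply] using vY_fb j i

lemma kill_basis (W : Module.End k (Vi k)) (h0 : W (fb k (0, 0)) = 0)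
    (hX : ∀ w, W (Xo k w) = Xo k (W w))
    (hY : ∀ w, W w = 0 → W (Yo k w) = 0) (p : ℕ × ℕ) : W (fb k p) = 0 := by
  obtain ⟨i, j⟩ := p
  induction j with
  | zero =>
    induction i with
    | zero => exact h0
    | succ i ih => rw [← y0]; exact hY _ ih
  | succ j ih => rw [← Xo_fb, hX, ih, map_zero]

lemma vG (w : Vi k) :
    Vop k lam (Go k w) = Go k (Vop k lam w) + Go k (Uo k w) := by
  have hXl : ∀ w : Vi k, (Vop k lam * Go k - Go k * Vop k lam - Go k * Uo k) (Xo k w)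
      = Xo k ((Vop k lam * Go k - Go k * Vop k lam - Go k * Uo k) w) := by
    intro w
    simp only [LinearMap.sub_apply, Module.End.mul_apply]
    simp only [gX, vX, uX, uG, map_add, map_sub, map_smul]
    module
  have hYl : ∀ w : Vi k, (Vop k lam * Go k - Go k * Vop k lam - Go k * Uo k) (Yo k w)
      = Yo k ((Vop k lam * Go k - Go k * Vop k lam - Go k * Uo k) w)
        + Xo k ((Vop k lam * Go k - Go k * Vop k lam - Go k * Uo k) w) := by
    intro w
    simp only [LinearMap.sub_apply, Module.End.mul_apply]
    simp only [gY, vY, uY, vX, uX, gX, uG, xiG, map_add, map_sub, map_smul]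
    module
  have key : ∀ p, (Vop k lam * Go k - Go k * Vop k lam - Go k * Uo k) (fb k p) = 0 := by
    refine kill_basis _ ?_ hXl (fun w hw => by rw [hYl, hw, map_zero, map_zero, add_zero])
    simp only [LinearMap.sub_apply, Module.End.mul_apply, Go_fb00, Vop_fb00, Uo_fb00, map_zero]
    abel
  have h2 := end_ext' (f := Vop k lam * Go k - Go k * Vop k lam - Go k * Uo k) (g := 0)
    (fun p => by rw [key p]; rfl) w
  simp only [LinearMap.sub_apply, Module.End.mul_apply, LinearMap.zero_apply] at h2
  rw [sub_sub] at h2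
  exact sub_eq_zero.mp h2

lemma vXi (w : Vi k) :
    Vop k lam (Xio k lam w) = Xio k lam (Vop k lam w) - (2 : k) • Vop k lam w := by
  have hXl : ∀ w : Vi k,
      (Vop k lam * Xio k lam - Xio k lam * Vop k lam + (2 : k) • Vop k lam) (Xo k w)
      = Xo k ((Vop k lam * Xio k lam - Xio k lam * Vop k lam + (2 : k) • Vop k lam) w) := by
    intro w
    simp only [LinearMap.add_apply, LinearMap.sub_apply, Module.End.mul_apply,
      LinearMap.smul_apply]
    simp only [xiX, vX, uX, uXi, xiG, map_add, map_sub, map_smul]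
    module
  have hYl : ∀ w : Vi k,
      (Vop k lam * Xio k lam - Xio k lam * Vop k lam + (2 : k) • Vop k lam) (Yo k w)
      = Yo k ((Vop k lam * Xio k lam - Xio k lam * Vop k lam + (2 : k) • Vop k lam) w) := by
    intro w
    simp only [LinearMap.add_apply, LinearMap.sub_apply, Module.End.mul_apply,
      LinearMap.smul_apply]
    simp only [xiY, vY, uY, uXi, xiG, map_add, map_sub, map_smul]
    module
  have key : ∀ p,
      (Vop k lam * Xio k lam - Xio k lam * Vop k lam + (2 : k) • Vop k lam) (fb k p) = 0 := by
    refine kill_basis _ ?_ hXl (fun w hw => by rw [hYl, hw, map_zero])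
    simp only [LinearMap.add_apply, LinearMap.sub_apply, Module.End.mul_apply,
      LinearMap.smul_apply, Xio_fb00, Vop_fb00, map_zero, map_smul, smul_zero]
    abel
  have h2 := end_ext'
    (f := Vop k lam * Xio k lam - Xio k lam * Vop k lam + (2 : k) • Vop k lam) (g := 0)
    (fun p => by rw [key p]; rfl) w
  simp only [LinearMap.add_apply, LinearMap.sub_apply, Module.End.mul_apply,
    LinearMap.smul_apply, LinearMap.zero_apply] at h2
  have h3 : Vop k lam (Xio k lam w)
      = Xio k lam (Vop k lam w) - (2:k) • Vop k lam w := by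
    rw [← sub_eq_zero]
    rw [← h2]; abel
  exact h3

lemma vU (w : Vi k) :
    Vop k lam (Uo k w) = Uo k (Vop k lam w) - (1 / 2 : k) • Uo k (Uo k w) := by
  have hXl : ∀ w : Vi k,
      (Vop k lam * Uo k - Uo k * Vop k lam + (1 / 2 : k) • (Uo k * Uo k)) (Xo k w)
      = Xo k ((Vop k lam * Uo k - Uo k * Vop k lam + (1 / 2 : k) • (Uo k * Uo k)) w) := by
    intro w
    simp only [LinearMap.add_apply, LinearMap.sub_apply, Module.End.mul_apply,
      LinearMap.smul_apply]
    simp only [vX, uX, uG, map_add, map_sub, map_smul]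
    module
  have hYl : ∀ w : Vi k,
      (Vop k lam * Uo k - Uo k * Vop k lam + (1 / 2 : k) • (Uo k * Uo k)) (Yo k w)
      = Yo k ((Vop k lam * Uo k - Uo k * Vop k lam + (1 / 2 : k) • (Uo k * Uo k)) w) := by
    intro w
    simp only [LinearMap.add_apply, LinearMap.sub_apply, Module.End.mul_apply,
      LinearMap.smul_apply]
    simp only [vY, uY, vG, uG, uXi, xiG, gY, vX, uX, gX, map_add, map_sub, map_smul]
    match_scalars <;> first | norm_num | ring
  have key : ∀ p,
      (Vop k lam * Uo k - Uo k * Vop k lam + (1 / 2 : k) • (Uo k * Uo k)) (fb k p) = 0 := by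
    refine kill_basis _ ?_ hXl (fun w hw => by rw [hYl, hw, map_zero])
    simp only [LinearMap.add_apply, LinearMap.sub_apply, Module.End.mul_apply,
      LinearMap.smul_apply, Vop_fb00, Uo_fb00, map_zero, smul_zero]
    abel
  have h2 := end_ext'
    (f := Vop k lam * Uo k - Uo k * Vop k lam + (1 / 2 : k) • (Uo k * Uo k)) (g := 0)
    (fun p => by rw [key p]; rfl) w
  simp only [LinearMap.add_apply, LinearMap.sub_apply, Module.End.mul_apply,
    LinearMap.smul_apply, LinearMap.zero_apply] at h2
  rw [← sub_eq_zero]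
  rw [← h2]; abel
/-! ### Support lemmas -/

omit [CharZero k] in
lemma op_supported {s t : Set (ℕ × ℕ)} (Op : Module.End k (Vi k))
    (h : ∀ p ∈ s, Op (fb k p) ∈ Finsupp.supported k k t) {w : Vi k}
    (hw : w ∈ Finsupp.supported k k s) : Op w ∈ Finsupp.supported k k t := by
  rw [Finsupp.supported_eq_span_single] at hw
  have hle : Submodule.span k ((fun i => Finsupp.single i (1 : k)) '' s)
      ≤ Submodule.comap Op (Finsupp.supported k k t) := by
    refine Submodule.span_le.mpr ?_
    rintro x ⟨p, hp, rfl⟩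
    exact Submodule.mem_comap.mpr (h p hp)
  exact hle hw

variable (k) in
def SD (d j0 : ℕ) : Submodule k (Vi k) :=
  Finsupp.supported k k {q : ℕ × ℕ | q.1 + q.2 = d ∧ j0 ≤ q.2}

omit [CharZero k] in
lemma fb_mem_SD {d j0 : ℕ} (p : ℕ × ℕ) (h1 : p.1 + p.2 = d) (h2 : j0 ≤ p.2) :
    fb k p ∈ SD k d j0 :=
  Finsupp.single_mem_supported k 1 ⟨h1, h2⟩

omit [CharZero k] in
lemma SD_le {d j0 d' j0' : ℕ} (h : d = d') (h2 : j0' ≤ j0) : SD k d j0 ≤ SD k d' j0' := by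
  subst h
  exact Finsupp.supported_mono (fun q hq => ⟨hq.1, le_trans h2 hq.2⟩)

omit [CharZero k] in
lemma X_SD {d j0 : ℕ} {w : Vi k} (hw : w ∈ SD k d j0) : Xo k w ∈ SD k (d + 1) (j0 + 1) := by
  refine op_supported _ (fun p hp => ?_) hw
  rw [show fb k p = fb k (p.1, p.2) from rfl, Xo_fb]
  obtain ⟨h1, h2⟩ := hp
  exact fb_mem_SD _ (show p.1 + (p.2 + 1) = d + 1 by omega) (show j0 + 1 ≤ p.2 + 1 by omega)

omit [CharZero k] in
lemma Y_SD {d j0 : ℕ} {w : Vi k} (hw : w ∈ SD k d j0) : Yo k w ∈ SD k (d + 1) j0 := by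
  refine op_supported _ (fun p hp => ?_) hw
  rw [show fb k p = fb k (p.1, p.2) from rfl, Yo_fb]
  obtain ⟨h1, h2⟩ := hp
  exact sub_mem (fb_mem_SD _ (show p.1 + 1 + p.2 = d + 1 by omega) h2)
    (Submodule.smul_mem _ _ (fb_mem_SD _ (show p.1 + (p.2 + 1) = d + 1 by omega) (by omega)))

omit [CharZero k] in
lemma Xpow_SD {d j0 : ℕ} (j : ℕ) {w : Vi k} (hw : w ∈ SD k d j0) :
    (Xo k ^ j) w ∈ SD k (d + j) (j0 + j) := by
  induction j with
  | zero => simpa using hw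
  | succ j ih =>
    rw [pow_succ_apply]
    exact SD_le (by omega) (by omega) (X_SD ih)

omit [CharZero k] in
lemma YX_SD {d j0 : ℕ} {w : Vi k} (hw : w ∈ SD k d j0) :
    (Yo k + Xo k) w ∈ SD k (d + 1) j0 := by
  rw [LinearMap.add_apply]
  exact add_mem (Y_SD hw) (SD_le rfl (by omega) (X_SD hw))

omit [CharZero k] in
lemma YmX_SD {d j0 : ℕ} {w : Vi k} (hw : w ∈ SD k d j0) :
    (Yo k - Xo k) w ∈ SD k (d + 1) j0 := by
  rw [LinearMap.sub_apply]
  exact sub_mem (Y_SD hw) (SD_le rfl (by omega) (X_SD hw))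

omit [CharZero k] in
lemma fb00_SD : fb k (0, 0) ∈ SD k 0 0 := fb_mem_SD _ rfl (by omega)

omit [CharZero k] in
lemma YXpow_SD (i : ℕ) : ((Yo k + Xo k) ^ i) (fb k (0, 0)) ∈ SD k i 0 := by
  induction i with
  | zero => simpa using fb00_SD
  | succ i ih => rw [pow_succ_apply]; exact YX_SD ih

omit [CharZero k] in
lemma YmXpow_SD (i : ℕ) : ((Yo k - Xo k) ^ i) (fb k (0, 0)) ∈ SD k i 0 := by
  induction i with
  | zero => simpa using fb00_SD
  | succ i ih => rw [pow_succ_apply]; exact YmX_SD ih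

omit [CharZero k] in
lemma g_supp (i j : ℕ) : Go k (fb k (i, j)) ∈ SD k (i + j) j := by
  rw [Go_fb]
  exact SD_le (by omega) (by omega) (Xpow_SD j (YXpow_SD i))

omit [CharZero k] in
lemma gi_supp (i j : ℕ) : Gio k (fb k (i, j)) ∈ SD k (i + j) j := by
  rw [Gio_fb]
  exact SD_le (by omega) (by omega) (Xpow_SD j (YmXpow_SD i))

omit [CharZero k] in
lemma fb_x' (i j' j : ℕ) : (Xo k ^ j) (fb k (i, j')) = fb k (i, j' + j) := by
  induction j with
  | zero => simp
  | succ j ih => rw [pow_succ_apply, ih, Xo_fb, ← Nat.add_assoc]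

lemma gaux (i : ℕ) : ∃ r ∈ SD k (i + 1) 2,
    ((Yo k + Xo k) ^ (i + 1)) (fb k (0, 0))
      = fb k (i + 1, 0) + ((i + 1 : ℕ) : k) • fb k (i, 1) + r := by
  induction i with
  | zero =>
    refine ⟨0, zero_mem _, ?_⟩
    rw [pow_one, LinearMap.add_apply, y0, Xo_fb]
    norm_num
  | succ i ih =>
    obtain ⟨r, hr, heq⟩ := ih
    refine ⟨((i + 1 : ℕ) : k) • ((1 / 2 : k) • fb k (i, 2)) + (Yo k r + Xo k r), ?_, ?_⟩
    · refine add_mem (Submodule.smul_mem _ _ (Submodule.smul_mem _ _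
        (fb_mem_SD _ (show i + 2 = i + 1 + 1 by omega) (by omega)))) (add_mem (Y_SD hr)
        (SD_le rfl (by omega) (X_SD hr)))
    · rw [pow_succ_apply, heq]
      simp only [LinearMap.add_apply, map_add, map_smul, Yo_fb, Xo_fb, y0]
      push_cast
      module

lemma g_decomp (i j : ℕ) : ∃ r ∈ SD k (i + 1 + j) (j + 2),
    Go k (fb k (i + 1, j))
      = fb k (i + 1, j) + ((i + 1 : ℕ) : k) • fb k (i, j + 1) + r := by
  obtain ⟨r, hr, heq⟩ := gaux (k := k) i
  refine ⟨(Xo k ^ j) r, SD_le (by omega) (by omega) (Xpow_SD j hr), ?_⟩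
  rw [Go_fb, heq]
  simp only [map_add, map_smul, fb_x', Nat.zero_add, Nat.add_comm 1 j]

lemma u_supp (i : ℕ) : Usub k (i + 1) ∈ SD k i 1 := by
  induction i with
  | zero =>
    rw [Usub_succ, Usub_zero, map_zero, Go_fb00]
    simp only [zero_add, sub_self]
    exact zero_mem _
  | succ i ih =>
    rw [Usub_succ]
    obtain ⟨r, hr, heq⟩ := g_decomp (k := k) i 0
    rw [heq]
    have h1 : fb k (i + 1, 0) + ((i + 1 : ℕ) : k) • fb k (i, 0 + 1) + r - fb k (i + 1, 0)
        = ((i + 1 : ℕ) : k) • fb k (i, 1) + r := by abel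
    have : Yo k (Usub k (i + 1)) + fb k (i + 1, 0)
        - (fb k (i + 1, 0) + ((i + 1 : ℕ) : k) • fb k (i, 0 + 1) + r)
        = Yo k (Usub k (i + 1)) - (((i + 1 : ℕ) : k) • fb k (i, 1) + r) := by abel
    rw [this]
    exact sub_mem (Y_SD ih) (add_mem (Submodule.smul_mem _ _
      (fb_mem_SD _ (show i + 1 = i + 1 from rfl) (le_refl 1))) (SD_le (by omega) (by omega) hr))

lemma uo_supp (i j : ℕ) : Uo k (fb k (i + 1, j)) ∈ SD k (i + j) (j + 1) := by
  rw [Uo_fb]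
  exact SD_le (by omega) (by omega) (Xpow_SD j (u_supp i))

omit [CharZero k] in
lemma uo_zero (j : ℕ) : Uo k (fb k (0, j)) = 0 := by
  rw [Uo_fb, Usub_zero, map_zero]

omit [CharZero k] in
lemma v_zero (j : ℕ) : Vsub k lam 0 j = 0 := by
  induction j with
  | zero => rw [Vsub_zero, V0_zero]
  | succ j ih =>
    rw [Vsub_succ, ih, uo_zero]
    simp only [map_zero, Go_fb, pow_zero, Module.End.one_apply, fb_x', Nat.zero_add]
    abel
/-! ### decomposition of `V` with its critical coefficient -/

variable (lam) in
def vc (i j : ℕ) : k := ((i + 1 : ℕ) : k) * (lam - 2 * (j : k) - (i : k)) / 2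

lemma v_decomp (i j : ℕ) : ∃ r ∈ SD k (i + j) (j + 1),
    Vsub k lam (i + 1) j = vc lam i j • fb k (i, j) + r := by
  induction j generalizing i with
  | zero =>
    induction i with
    | zero =>
      refine ⟨0, zero_mem _, ?_⟩
      rw [Vsub_zero, V0_succ, V0_zero, map_zero, Uo_fb00, map_zero, Xio_fb00, map_smul,
        Go_fb00, vc]
      push_cast
      match_scalars <;> ring
    | succ i ih =>
      obtain ⟨r, hr, heq⟩ := ih
      obtain ⟨r2, hr2, heq2⟩ := g_decomp (k := k) i 0
      refine ⟨Yo k r + (1 / 2 : k) • ((lam - 2 * ((i : k) + 1)) •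
          (((i + 1 : ℕ) : k) • fb k (i, 0 + 1) + r2)) + Yo k (Usub k (i + 1)), ?_, ?_⟩
      · refine add_mem (add_mem (Y_SD hr) (Submodule.smul_mem _ _ (Submodule.smul_mem _ _
          (add_mem (Submodule.smul_mem _ _ (fb_mem_SD _ (by omega) (by omega)))
            (SD_le (by omega) (by omega) hr2))))) (Y_SD (u_supp i))
      · rw [Vsub_zero, V0_succ, ← Vsub_zero, heq, Uo_fb_i0, Xio_fb, map_smul, heq2, map_add,
          map_smul, y0]
        simp only [vc]
        push_cast
        match_scalars <;> · field_simp; try ring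
  | succ j ih =>
    obtain ⟨r, hr, heq⟩ := ih i
    obtain ⟨r2, hr2, heq2⟩ := g_decomp (k := k) i j
    refine ⟨Xo k r - r2 + Xo k (Uo k (fb k (i + 1, j))), ?_, ?_⟩
    · refine add_mem (sub_mem (SD_le (by omega) (by omega) (X_SD hr))
        (SD_le (by omega) (by omega) hr2))
        (SD_le (by omega) (by omega) (X_SD (uo_supp i j)))
    · rw [Vsub_succ, heq, heq2, map_add, map_smul]
      simp only [vc, Xo_fb]
      push_cast
      match_scalars <;> · field_simp; try ring

/-! ### the bad region and its stability -/

variable (k n m) in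
def Ksub : Submodule k (Vi k) :=
  Finsupp.supported k k {p : ℕ × ℕ | ¬(p.2 ≤ m ∧ p.1 ≤ n + 2 * (m - p.2))}

lemma fb_mem_K {i j : ℕ} (h : ¬(j ≤ m ∧ i ≤ n + 2 * (m - j))) :
    fb k (i, j) ∈ Ksub k n m :=
  Finsupp.single_mem_supported k 1 h

lemma SD_le_K {d j0 : ℕ}
    (h : ∀ a b : ℕ, a + b = d → j0 ≤ b → ¬(b ≤ m ∧ a ≤ n + 2 * (m - b))) :
    SD k d j0 ≤ Ksub k n m :=
  Finsupp.supported_mono (fun q hq => h q.1 q.2 hq.1 hq.2)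

lemma stab_X {w : Vi k} (hw : w ∈ Ksub k n m) : Xo k w ∈ Ksub k n m := by
  refine op_supported _ (fun p hp => ?_) hw
  obtain ⟨i, j⟩ := p
  rw [Xo_fb]
  exact fb_mem_K (by simp only [Set.mem_setOf_eq] at hp; omega)

lemma stab_Y {w : Vi k} (hw : w ∈ Ksub k n m) : Yo k w ∈ Ksub k n m := by
  refine op_supported _ (fun p hp => ?_) hw
  obtain ⟨i, j⟩ := p
  simp only [Set.mem_setOf_eq] at hp
  rw [Yo_fb]
  exact sub_mem (fb_mem_K (by omega)) (Submodule.smul_mem _ _ (fb_mem_K (by omega)))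

lemma stab_Xi {w : Vi k} (hw : w ∈ Ksub k n m) : Xio k lam w ∈ Ksub k n m := by
  refine op_supported _ (fun p hp => ?_) hw
  obtain ⟨i, j⟩ := p
  rw [Xio_fb]
  exact Submodule.smul_mem _ _ (fb_mem_K hp)

lemma stab_G {w : Vi k} (hw : w ∈ Ksub k n m) : Go k w ∈ Ksub k n m := by
  refine op_supported _ (fun p hp => ?_) hw
  obtain ⟨i, j⟩ := p
  simp only [Set.mem_setOf_eq] at hp
  exact SD_le_K (fun a b h1 h2 => by omega) (g_supp i j)

lemma stab_Gi {w : Vi k} (hw : w ∈ Ksub k n m) : Gio k w ∈ Ksub k n m := by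
  refine op_supported _ (fun p hp => ?_) hw
  obtain ⟨i, j⟩ := p
  simp only [Set.mem_setOf_eq] at hp
  exact SD_le_K (fun a b h1 h2 => by omega) (gi_supp i j)

lemma stab_U {w : Vi k} (hw : w ∈ Ksub k n m) : Uo k w ∈ Ksub k n m := by
  refine op_supported _ (fun p hp => ?_) hw
  obtain ⟨i, j⟩ := p
  simp only [Set.mem_setOf_eq] at hp
  match i with
  | 0 => rw [uo_zero]; exact zero_mem _
  | i + 1 => exact SD_le_K (fun a b h1 h2 => by omega) (uo_supp i j)

lemma stab_V {w : Vi k} (hw : w ∈ Ksub k n m) :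
    Vop k ((n + 2 * m : ℕ) : k) w ∈ Ksub k n m := by
  refine op_supported _ (fun p hp => ?_) hw
  obtain ⟨i, j⟩ := p
  simp only [Set.mem_setOf_eq] at hp
  rw [Vop_fb]
  match i with
  | 0 => rw [v_zero]; exact zero_mem _
  | i + 1 =>
    obtain ⟨r, hr, heq⟩ := v_decomp (k := k) (lam := ((n + 2 * m : ℕ) : k)) i j
    rw [heq]
    refine add_mem ?_ (SD_le_K (fun a b h1 h2 => by omega) hr)
    by_cases hgood : j ≤ m ∧ i ≤ n + 2 * (m - j)
    · have hi : i = n + 2 * (m - j) := by omega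
      have hc : vc ((n + 2 * m : ℕ) : k) i j = 0 := by
        rw [vc, hi]
        have : ((n + 2 * (m - j) : ℕ) : k) = ((n + 2 * m : ℕ) : k) - 2 * (j : k) := by
          push_cast [Nat.cast_sub hgood.1]
          ring
        rw [this]
        ring
      rw [hc, zero_smul]
      exact zero_mem _
    · exact Submodule.smul_mem _ _ (fb_mem_K hgood)
/-! ### the quotient module `Q` and the representation of `D` on it -/

variable (k n m) in
abbrev Qmod : Type := Vi k ⧸ Ksub k n m

variable (k n m) in
def QX : Module.End k (Qmod k n m) := Submodule.mapQ _ _ (Xo k) (fun _ h => stab_X h)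
variable (k n m) in
def QY : Module.End k (Qmod k n m) := Submodule.mapQ _ _ (Yo k) (fun _ h => stab_Y h)
variable (k n m) in
def QXi : Module.End k (Qmod k n m) :=
  Submodule.mapQ _ _ (Xio k ((n + 2 * m : ℕ) : k)) (fun _ h => stab_Xi h)
variable (k n m) in
def QG : Module.End k (Qmod k n m) := Submodule.mapQ _ _ (Go k) (fun _ h => stab_G h)
variable (k n m) in
def QGi : Module.End k (Qmod k n m) := Submodule.mapQ _ _ (Gio k) (fun _ h => stab_Gi h)
variable (k n m) in
def QU : Module.End k (Qmod k n m) := Submodule.mapQ _ _ (Uo k) (fun _ h => stab_U h)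
variable (k n m) in
def QV : Module.End k (Qmod k n m) :=
  Submodule.mapQ _ _ (Vop k ((n + 2 * m : ℕ) : k)) (fun _ h => stab_V h)


lemma QX_mk (w : Vi k) : QX k n m (Submodule.Quotient.mk (p := Ksub k n m) w) = (Submodule.Quotient.mk (p := Ksub k n m) (Xo k w)) := rfl
lemma QY_mk (w : Vi k) : QY k n m (Submodule.Quotient.mk (p := Ksub k n m) w) = (Submodule.Quotient.mk (p := Ksub k n m) (Yo k w)) := rfl
lemma QXi_mk (w : Vi k) : QXi k n m (Submodule.Quotient.mk (p := Ksub k n m) w) = (Submodule.Quotient.mk (p := Ksub k n m) (Xio k ((n + 2 * m : ℕ) : k) w)) := rfl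
lemma QG_mk (w : Vi k) : QG k n m (Submodule.Quotient.mk (p := Ksub k n m) w) = (Submodule.Quotient.mk (p := Ksub k n m) (Go k w)) := rfl
lemma QGi_mk (w : Vi k) : QGi k n m (Submodule.Quotient.mk (p := Ksub k n m) w) = (Submodule.Quotient.mk (p := Ksub k n m) (Gio k w)) := rfl
lemma QU_mk (w : Vi k) : QU k n m (Submodule.Quotient.mk (p := Ksub k n m) w) = (Submodule.Quotient.mk (p := Ksub k n m) (Uo k w)) := rfl
lemma QV_mk (w : Vi k) : QV k n m (Submodule.Quotient.mk (p := Ksub k n m) w) = (Submodule.Quotient.mk (p := Ksub k n m) (Vop k ((n + 2 * m : ℕ) : k) w)) := rfl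

variable (k n m) in
def gens : DGen → Module.End k (Qmod k n m)
  | DGen.u => QU k n m
  | DGen.v => QV k n m
  | DGen.xi => QXi k n m
  | DGen.g => QG k n m
  | DGen.ginv => QGi k n m
  | DGen.x => QX k n m
  | DGen.y => QY k n m

variable (k n m) in
def Lfree : FreeAlgebra k DGen →ₐ[k] Module.End k (Qmod k n m) :=
  FreeAlgebra.lift k (gens k n m)

lemma two_end (q : Qmod k n m) :
    (FreeAlgebra.lift k (gens k n m)) 2 q = (2 : k) • q := by
  rw [map_ofNat]
  show (2 : Module.End k (Qmod k n m)) q = (2 : k) • q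
  rw [show (2 : Module.End k (Qmod k n m)) = 1 + 1 by norm_num, LinearMap.add_apply,
    Module.End.one_apply, show (2 : k) = 1 + 1 by norm_num, add_smul, one_smul]

lemma Lfree_rel : ∀ ⦃a b : FreeAlgebra k DGen⦄, DRel k a b → Lfree k n m a = Lfree k n m b := by
  intro a b h
  induction h <;>
    simp only [map_mul, map_add, map_sub, map_one, map_smul, Lfree, FreeAlgebra.lift_ι_apply,
      gens] <;>
    refine Submodule.linearMap_qext _ (LinearMap.ext fun w => ?_) <;>
    simp only [LinearMap.comp_apply, Submodule.mkQ_apply, Module.End.mul_apply,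
      LinearMap.add_apply, LinearMap.sub_apply, LinearMap.smul_apply, Module.End.one_apply,
      QX_mk, QY_mk, QXi_mk, QG_mk, QGi_mk, QU_mk, QV_mk, two_end]
  · rw [gGi]
  · rw [giG]
  · rw [xiG]
  · rw [gX]
  · rw [gY, Submodule.Quotient.mk_add]
  · rw [xiY, Submodule.Quotient.mk_sub, Submodule.Quotient.mk_smul]
  · rw [xiX, Submodule.Quotient.mk_sub, Submodule.Quotient.mk_smul]
  · rw [uG]
  · rw [vG, Submodule.Quotient.mk_add]
  · rw [vXi, Submodule.Quotient.mk_sub, Submodule.Quotient.mk_smul]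
  · rw [uXi, Submodule.Quotient.mk_sub, Submodule.Quotient.mk_smul]
  · rw [yX, Submodule.Quotient.mk_sub, Submodule.Quotient.mk_smul]
  · rw [vU, Submodule.Quotient.mk_sub, Submodule.Quotient.mk_smul]
  · rw [uX]
  · rw [vX, Submodule.Quotient.mk_add, Submodule.Quotient.mk_sub,
      Submodule.Quotient.mk_add]
    abel
  · rw [uY, Submodule.Quotient.mk_sub, Submodule.Quotient.mk_add]
    abel
  · rw [vY, Submodule.Quotient.mk_add, Submodule.Quotient.mk_add,
      Submodule.Quotient.mk_smul]

/-! ### the representation `φ : D → End Q` and the evaluation map -/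

variable (k n m) in
def phiD : D k →ₐ[k] Module.End k (Qmod k n m) :=
  RingQuot.liftAlgHom k ⟨Lfree k n m, Lfree_rel⟩

lemma phiD_g : phiD k n m (Dg k) = QG k n m := by
  rw [Dg, phiD, RingQuot.liftAlgHom_mkAlgHom_apply, Lfree, FreeAlgebra.lift_ι_apply]; rfl
lemma phiD_gi : phiD k n m (Dginv k) = QGi k n m := by
  rw [Dginv, phiD, RingQuot.liftAlgHom_mkAlgHom_apply, Lfree, FreeAlgebra.lift_ι_apply]; rfl
lemma phiD_xi : phiD k n m (Dxi k) = QXi k n m := by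
  rw [Dxi, phiD, RingQuot.liftAlgHom_mkAlgHom_apply, Lfree, FreeAlgebra.lift_ι_apply]; rfl
lemma phiD_u : phiD k n m (Du k) = QU k n m := by
  rw [Du, phiD, RingQuot.liftAlgHom_mkAlgHom_apply, Lfree, FreeAlgebra.lift_ι_apply]; rfl
lemma phiD_v : phiD k n m (Dv k) = QV k n m := by
  rw [Dv, phiD, RingQuot.liftAlgHom_mkAlgHom_apply, Lfree, FreeAlgebra.lift_ι_apply]; rfl
lemma phiD_x : phiD k n m (Dx k) = QX k n m := by
  rw [Dx, phiD, RingQuot.liftAlgHom_mkAlgHom_apply, Lfree, FreeAlgebra.lift_ι_apply]; rfl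
lemma phiD_y : phiD k n m (Dy k) = QY k n m := by
  rw [Dy, phiD, RingQuot.liftAlgHom_mkAlgHom_apply, Lfree, FreeAlgebra.lift_ι_apply]; rfl

variable (k n m) in
def z0 : Qmod k n m := Submodule.Quotient.mk (fb k (0, 0))

variable (k n m) in
def ev : D k →ₗ[k] Qmod k n m where
  toFun d := phiD k n m d (z0 k n m)
  map_add' a b := by simp only [map_add, LinearMap.add_apply]
  map_smul' c d := by simp only [map_smul, LinearMap.smul_apply, RingHom.id_apply]

lemma QXpow_mk (j : ℕ) (w : Vi k) :
    ((QX k n m) ^ j) (Submodule.Quotient.mk (p := Ksub k n m) w)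
      = Submodule.Quotient.mk (p := Ksub k n m) ((Xo k ^ j) w) := by
  induction j with
  | zero => simp
  | succ j ih => rw [pow_succ_apply, pow_succ_apply, ih, QX_mk]

lemma QYpow_mk (i : ℕ) (w : Vi k) :
    ((QY k n m) ^ i) (Submodule.Quotient.mk (p := Ksub k n m) w)
      = Submodule.Quotient.mk (p := Ksub k n m) ((Yo k ^ i) w) := by
  induction i with
  | zero => simp
  | succ i ih => rw [pow_succ_apply, pow_succ_apply, ih, QY_mk]

lemma Ypow_supp (a j : ℕ) : (Yo k ^ a) (fb k (0, j)) ∈ SD k (a + j) j := by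
  induction a with
  | zero => rw [pow_zero, Module.End.one_apply]; exact fb_mem_SD _ (by omega) (le_refl j)
  | succ a ih =>
    rw [pow_succ_apply]
    exact SD_le (Nat.add_right_comm a j 1) (le_refl j) (Y_SD ih)

lemma ev_J {x : D k} (hx : x ∈ Jideal k n m) : ev k n m x = 0 := by
  let SJ : Submodule (D k) (D k) :=
    { carrier := {d | phiD k n m d (z0 k n m) = 0}
      add_mem' := fun {a b} ha hb => by
        simp only [Set.mem_setOf_eq, map_add, LinearMap.add_apply] at *
        rw [ha, hb, add_zero]
      zero_mem' := by simp only [Set.mem_setOf_eq, map_zero, LinearMap.zero_apply]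
      smul_mem' := fun c x hx => by
        simp only [Set.mem_setOf_eq, smul_eq_mul, map_mul, Module.End.mul_apply] at *
        rw [hx, map_zero] }
  have hJ : Jideal k n m ≤ SJ := by
    rw [Jideal]
    refine Submodule.span_le.mpr ?_
    rintro x (h | h)
    · simp only [Set.mem_insert_iff, Set.mem_singleton_iff] at h
      rcases h with rfl | rfl | rfl | rfl | rfl
      · show phiD k n m (Dg k - 1) (z0 k n m) = 0
        rw [map_sub, map_one, LinearMap.sub_apply, phiD_g, Module.End.one_apply, z0, QG_mk,
          Go_fb00, sub_self]
      · show phiD k n m (Dxi k - ((n + 2 * m : ℕ) : D k)) (z0 k n m) = 0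
        rw [map_sub, map_natCast, LinearMap.sub_apply, phiD_xi, Module.End.natCast_apply,
          z0, QXi_mk, Xio_fb00, Submodule.Quotient.mk_smul, Nat.cast_smul_eq_nsmul, sub_self]
      · show phiD k n m (Du k) (z0 k n m) = 0
        rw [phiD_u, z0, QU_mk, Uo_fb00]; rfl
      · show phiD k n m (Dv k) (z0 k n m) = 0
        rw [phiD_v, z0, QV_mk, Vop_fb00]; rfl
      · show phiD k n m (Dx k ^ (m + 1)) (z0 k n m) = 0
        rw [map_pow, phiD_x, z0, QXpow_mk, fb_x']
        rw [Submodule.Quotient.mk_eq_zero]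
        exact fb_mem_K (by omega)
    · obtain ⟨j, hj, rfl⟩ := h
      show phiD k n m (Dy k ^ (n + 2 * (m - j) + 1) * Dx k ^ j) (z0 k n m) = 0
      rw [map_mul, map_pow, map_pow, phiD_x, phiD_y, Module.End.mul_apply, z0, QXpow_mk,
        fb_x', QYpow_mk, Submodule.Quotient.mk_eq_zero]
      refine SD_le_K (fun a b h1 h2 => by omega) (Ypow_supp _ _)
  exact hJ hx

variable (k n m) in
def psi : Tmod k n m →ₗ[k] Qmod k n m :=
  (Submodule.liftQ ((Jideal k n m).restrictScalars k) (ev k n m)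
      (fun x hx => LinearMap.mem_ker.mpr (ev_J hx))).comp
    (Submodule.Quotient.restrictScalarsEquiv k (Jideal k n m)).symm.toLinearMap

lemma psi_mk (d : D k) :
    psi k n m (Submodule.Quotient.mk d) = phiD k n m d (z0 k n m) := by
  rfl

lemma psi_surj : Function.Surjective (psi k n m) := by
  rw [← LinearMap.range_eq_top, eq_top_iff]
  rintro q -
  obtain ⟨w, rfl⟩ := Submodule.mkQ_surjective (Ksub k n m) q
  rw [Submodule.mkQ_apply]
  induction w using Finsupp.induction with
  | zero => exact zero_mem _
  | single_add p c f hp hc ih =>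
    rw [Submodule.Quotient.mk_add]
    refine add_mem ?_ ih
    rw [single_eq_smul_fb, Submodule.Quotient.mk_smul]
    refine Submodule.smul_mem _ _ ?_
    refine ⟨Submodule.Quotient.mk (Dx k ^ p.2 * Dy k ^ p.1), ?_⟩
    rw [psi_mk, map_mul, map_pow, map_pow, phiD_x, phiD_y, Module.End.mul_apply, z0,
      QYpow_mk, QXpow_mk, ← fb_eq]

/-! ### `Q` is isomorphic to the finitely supported functions on the good region -/

variable (k n m) in
def Pmap : Vi k →ₗ[k] ({p : ℕ × ℕ // p.2 ≤ m ∧ p.1 ≤ n + 2 * (m - p.2)} →₀ k) :=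
  Finsupp.lsum k fun p => LinearMap.toSpanSingleton k _
    (if h : p.2 ≤ m ∧ p.1 ≤ n + 2 * (m - p.2) then Finsupp.single (⟨p, h⟩) (1 : k) else 0)

lemma Pmap_single (p : ℕ × ℕ) (c : k) :
    Pmap k n m (Finsupp.single p c)
      = c • (if h : p.2 ≤ m ∧ p.1 ≤ n + 2 * (m - p.2)
          then Finsupp.single (⟨p, h⟩ :
            {p : ℕ × ℕ // p.2 ≤ m ∧ p.1 ≤ n + 2 * (m - p.2)}) (1 : k) else 0) := by
  simp [Pmap, LinearMap.toSpanSingleton_apply]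

lemma Pmap_K {w : Vi k} (hw : w ∈ Ksub k n m) : Pmap k n m w = 0 := by
  rw [Ksub, Finsupp.supported_eq_span_single] at hw
  have hle : Submodule.span k ((fun i => Finsupp.single i (1 : k)) ''
        {p : ℕ × ℕ | ¬(p.2 ≤ m ∧ p.1 ≤ n + 2 * (m - p.2))})
      ≤ LinearMap.ker (Pmap k n m) := by
    refine Submodule.span_le.mpr ?_
    rintro x ⟨p, hp, rfl⟩
    rw [SetLike.mem_coe, LinearMap.mem_ker, Pmap_single, dif_neg hp, smul_zero]
  exact hle hw

variable (k n m) in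
def Pbar : Qmod k n m →ₗ[k] ({p : ℕ × ℕ // p.2 ≤ m ∧ p.1 ≤ n + 2 * (m - p.2)} →₀ k) :=
  Submodule.liftQ _ (Pmap k n m) (fun _ hw => LinearMap.mem_ker.mpr (Pmap_K hw))

variable (k n m) in
def embQ : ({p : ℕ × ℕ // p.2 ≤ m ∧ p.1 ≤ n + 2 * (m - p.2)} →₀ k) →ₗ[k] Qmod k n m :=
  Finsupp.lsum k fun s => LinearMap.toSpanSingleton k _ (Submodule.Quotient.mk (fb k s.1))

variable (k n m) in
def Qequiv : Qmod k n m ≃ₗ[k] ({p : ℕ × ℕ // p.2 ≤ m ∧ p.1 ≤ n + 2 * (m - p.2)} →₀ k) := by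
  refine LinearEquiv.ofLinear (Pbar k n m) (embQ k n m) ?_ ?_
  · refine Finsupp.lhom_ext fun s b => ?_
    rw [LinearMap.comp_apply, LinearMap.id_apply, embQ, Finsupp.lsum_single,
      LinearMap.toSpanSingleton_apply, map_smul, Pbar, Submodule.liftQ_apply,
      show (fb k s.1) = Finsupp.single (s.1 : ℕ × ℕ) (1 : k) from rfl, Pmap_single,
      dif_pos s.2, Subtype.coe_eta, smul_smul, mul_one, Finsupp.smul_single, smul_eq_mul,
      mul_one]
  · refine Submodule.linearMap_qext _ (Finsupp.lhom_ext fun p b => ?_)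
    simp only [LinearMap.comp_apply, LinearMap.id_apply, Submodule.mkQ_apply]
    rw [Pbar, Submodule.liftQ_apply, Pmap_single, map_smul]
    by_cases h : p.2 ≤ m ∧ p.1 ≤ n + 2 * (m - p.2)
    · rw [dif_pos h, embQ, Finsupp.lsum_single, LinearMap.toSpanSingleton_apply, smul_smul,
        mul_one, ← Submodule.Quotient.mk_smul, ← single_eq_smul_fb]
    · rw [dif_neg h, map_zero, smul_zero, eq_comm, Submodule.Quotient.mk_eq_zero, single_eq_smul_fb]
      exact Submodule.smul_mem _ _ (fb_mem_K h)

variable (n m) in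
def sidxEquiv : {p : ℕ × ℕ // p.2 ≤ m ∧ p.1 ≤ n + 2 * (m - p.2)}
    ≃ (Σ j : Fin (m + 1), Fin (n + 2 * (m - (j : ℕ)) + 1)) where
  toFun p := ⟨⟨p.1.2, Nat.lt_succ_of_le p.2.1⟩, ⟨p.1.1, Nat.lt_succ_of_le p.2.2⟩⟩
  invFun s := ⟨(s.2.1, s.1.1), ⟨Nat.lt_succ_iff.mp s.1.isLt, Nat.lt_succ_iff.mp s.2.isLt⟩⟩
  left_inv p := Subtype.ext rfl
  right_inv s := by rcases s with ⟨⟨j, hj⟩, ⟨i, hi⟩⟩; rfl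

variable (k n m) in
instance sidxFintype : Fintype {p : ℕ × ℕ // p.2 ≤ m ∧ p.1 ≤ n + 2 * (m - p.2)} :=
  Fintype.ofEquiv _ (sidxEquiv n m).symm

lemma card_sidx :
    Fintype.card {p : ℕ × ℕ // p.2 ≤ m ∧ p.1 ≤ n + 2 * (m - p.2)}
      = (m + 1) * (n + m + 1) := by
  rw [Fintype.card_congr (sidxEquiv n m), Fintype.card_sigma]
  simp only [Fintype.card_fin]
  rw [Fin.sum_univ_eq_sum_range (fun j => n + 2 * (m - j) + 1) (m + 1)]
  have h2 : ∑ j ∈ Finset.range (m + 1), (m - j) = ∑ j ∈ Finset.range (m + 1), j := by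
    simpa using Finset.sum_range_reflect (fun j => j) (m + 1)
  have h3 : (∑ j ∈ Finset.range (m + 1), j) * 2 = (m + 1) * m :=
    by simpa using Finset.sum_range_id_mul_two (m + 1)
  have h1 : ∑ j ∈ Finset.range (m + 1), (n + 2 * (m - j) + 1)
      = ∑ j ∈ Finset.range (m + 1), ((n + 1) + 2 * (m - j)) :=
    Finset.sum_congr rfl (fun j _ => by ring)
  rw [h1, Finset.sum_add_distrib, Finset.sum_const, Finset.card_range, smul_eq_mul,
    ← Finset.mul_sum, h2, show 2 * ∑ j ∈ Finset.range (m + 1), j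
      = (∑ j ∈ Finset.range (m + 1), j) * 2 from by ring, h3]
  ring

lemma finrank_Q : Module.finrank k (Qmod k n m) = (m + 1) * (n + m + 1) := by
  rw [LinearEquiv.finrank_eq (Qequiv k n m), Module.finrank_finsupp_self, card_sidx]

/-! ### spanning of `T(n,m)` by the monomials `yⁱxʲ·z` -/

lemma rel_yx : Dy k * Dx k = Dx k * Dy k - (1 / 2 : k) • (Dx k * Dx k) := by
  rw [Dy, Dx, ← map_mul, RingQuot.mkAlgHom_rel k DRel.y_x]
  simp only [map_mul, map_add, map_sub, map_smul, map_one, map_ofNat]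

lemma rel_gig : Dginv k * Dg k = 1 := by
  rw [Dginv, Dg, ← map_mul, RingQuot.mkAlgHom_rel k DRel.ginv_g]
  simp only [map_mul, map_add, map_sub, map_smul, map_one, map_ofNat]

lemma rel_gx : Dg k * Dx k = Dx k * Dg k := by
  rw [Dg, Dx, ← map_mul, RingQuot.mkAlgHom_rel k DRel.g_x]
  simp only [map_mul, map_add, map_sub, map_smul, map_one, map_ofNat]

lemma rel_gy : Dg k * Dy k = Dy k * Dg k + Dx k * Dg k := by
  rw [Dg, Dy, Dx, ← map_mul, RingQuot.mkAlgHom_rel k DRel.g_y]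
  simp only [map_mul, map_add, map_sub, map_smul, map_one, map_ofNat]

lemma rel_xiy : Dxi k * Dy k = Dy k * Dxi k - 2 * Dy k := by
  rw [Dxi, Dy, ← map_mul, RingQuot.mkAlgHom_rel k DRel.xi_y]
  simp only [map_mul, map_add, map_sub, map_smul, map_one, map_ofNat]

lemma rel_xix : Dxi k * Dx k = Dx k * Dxi k - 2 * Dx k := by
  rw [Dxi, Dx, ← map_mul, RingQuot.mkAlgHom_rel k DRel.xi_x]
  simp only [map_mul, map_add, map_sub, map_smul, map_one, map_ofNat]

lemma rel_ux : Du k * Dx k = Dx k * Du k := by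
  rw [Du, Dx, ← map_mul, RingQuot.mkAlgHom_rel k DRel.u_x]
  simp only [map_mul, map_add, map_sub, map_smul, map_one, map_ofNat]

lemma rel_uy : Du k * Dy k = Dy k * Du k + (1 - Dg k) := by
  rw [Du, Dy, Dg, ← map_mul, RingQuot.mkAlgHom_rel k DRel.u_y]
  simp only [map_mul, map_add, map_sub, map_smul, map_one, map_ofNat]

lemma rel_vx : Dv k * Dx k = Dx k * Dv k + (1 - Dg k) + Dx k * Du k := by
  rw [Dv, Dx, Dg, Du, ← map_mul, RingQuot.mkAlgHom_rel k DRel.v_x]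
  simp only [map_mul, map_add, map_sub, map_smul, map_one, map_ofNat]

lemma rel_vy : Dv k * Dy k = Dy k * Dv k + (1 / 2 : k) • (Dg k * Dxi k) + Dy k * Du k := by
  rw [Dv, Dy, Dg, Dxi, Du, ← map_mul, RingQuot.mkAlgHom_rel k DRel.v_y]
  simp only [map_mul, map_add, map_sub, map_smul, map_one, map_ofNat]

lemma rel_xy : Dx k * Dy k = Dy k * Dx k + (1 / 2 : k) • (Dx k * Dx k) :=
  sub_eq_iff_eq_add.mp (rel_yx (k := k)).symm

/-- generators of `J`. -/
lemma gJ : Dg k - 1 ∈ Jideal k n m :=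
  Submodule.subset_span (Set.mem_union_left _ (by simp))
lemma xiJ : Dxi k - ((n + 2 * m : ℕ) : D k) ∈ Jideal k n m :=
  Submodule.subset_span (Set.mem_union_left _ (by simp))
lemma uJ : Du k ∈ Jideal k n m :=
  Submodule.subset_span (Set.mem_union_left _ (by simp))
lemma vJ : Dv k ∈ Jideal k n m :=
  Submodule.subset_span (Set.mem_union_left _ (by simp))
lemma xpowJ : Dx k ^ (m + 1) ∈ Jideal k n m :=
  Submodule.subset_span (Set.mem_union_left _ (by simp))
lemma ypowJ {j : ℕ} (hj : j ≤ m) :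
    Dy k ^ (n + 2 * (m - j) + 1) * Dx k ^ j ∈ Jideal k n m :=
  Submodule.subset_span (Set.mem_union_right _ ⟨j, hj, rfl⟩)

lemma smul_Tgen (d : D k) : d • Tgen k n m = Submodule.Quotient.mk d := by
  rw [Tgen, ← Submodule.Quotient.mk_smul, smul_eq_mul, mul_one]

lemma memJ_smul {d : D k} (hd : d ∈ Jideal k n m) : d • Tgen k n m = 0 := by
  rw [smul_Tgen, Submodule.Quotient.mk_eq_zero]
  exact hd

lemma g_z : Dg k • Tgen k n m = Tgen k n m := by
  have := memJ_smul (gJ (k := k) (n := n) (m := m))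
  rw [sub_smul, one_smul, sub_eq_zero] at this
  exact this

lemma xi_z : Dxi k • Tgen k n m = (n + 2 * m) • Tgen k n m := by
  have := memJ_smul (xiJ (k := k) (n := n) (m := m))
  rw [sub_smul, sub_eq_zero] at this
  rw [this, Nat.cast_smul_eq_nsmul]

lemma u_z : Du k • Tgen k n m = 0 := memJ_smul uJ
lemma v_z : Dv k • Tgen k n m = 0 := memJ_smul vJ

variable (k n m) in
def fam (s : {p : ℕ × ℕ // p.2 ≤ m ∧ p.1 ≤ n + 2 * (m - p.2)}) : Tmod k n m :=
  (Dy k ^ s.1.1 * Dx k ^ s.1.2) • Tgen k n m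

variable (k n m) in
def Sp : Submodule k (Tmod k n m) := Submodule.span k (Set.range (fam k n m))

lemma mono_mem (i j : ℕ) : (Dy k ^ i * Dx k ^ j) • Tgen k n m ∈ Sp k n m := by
  by_cases h : j ≤ m ∧ i ≤ n + 2 * (m - j)
  · exact Submodule.subset_span ⟨⟨(i, j), h⟩, rfl⟩
  · by_cases hjm : j ≤ m
    · have hi : i = (i - (n + 2 * (m - j) + 1)) + (n + 2 * (m - j) + 1) := by omega
      rw [hi, pow_add, mul_assoc, mul_smul, memJ_smul (ypowJ hjm), smul_zero]
      exact zero_mem _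
    · have hj : j = (j - (m + 1)) + (m + 1) := by omega
      rw [hj, pow_add, ← mul_assoc, mul_smul, memJ_smul xpowJ, smul_zero]
      exact zero_mem _

variable (k n m) in
def DsmulL (d : D k) : Tmod k n m →ₗ[k] Tmod k n m where
  toFun w := d • w
  map_add' a b := smul_add d a b
  map_smul' c w := by simp only [RingHom.id_apply]; exact smul_comm d c w

lemma Dsmul_mem {d : D k} (h : ∀ i j, d • ((Dy k ^ i * Dx k ^ j) • Tgen k n m) ∈ Sp k n m)
    {w : Tmod k n m} (hw : w ∈ Sp k n m) : d • w ∈ Sp k n m := by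
  have hle : Sp k n m ≤ Submodule.comap (DsmulL k n m d) (Sp k n m) := by
    refine Submodule.span_le.mpr ?_
    rintro x ⟨s, rfl⟩
    exact Submodule.mem_comap.mpr (h s.1.1 s.1.2)
  exact hle hw

lemma CY {w : Tmod k n m} (hw : w ∈ Sp k n m) : Dy k • w ∈ Sp k n m := by
  refine Dsmul_mem (fun i j => ?_) hw
  rw [← mul_smul, ← mul_assoc, ← pow_succ']
  exact mono_mem _ _

/-! `x`-closure via a normal-form lemma inside `D`. -/

lemma mulLeft_span {c : D k} {s : Set (D k)} {N : Submodule k (D k)}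
    (h : ∀ d ∈ s, c * d ∈ N) {w : D k} (hw : w ∈ Submodule.span k s) : c * w ∈ N := by
  have hle : Submodule.span k s ≤ Submodule.comap (LinearMap.mulLeft k c) N := by
    refine Submodule.span_le.mpr (fun d hd => Submodule.mem_comap.mpr (h d hd))
  exact hle hw

variable (k) in
def Mle (i0 : ℕ) : Submodule k (D k) :=
  Submodule.span k {d | ∃ a, a ≤ i0 ∧ ∃ b, d = Dy k ^ a * Dx k ^ b}

lemma mem_Mle {a i0 : ℕ} (h : a ≤ i0) (b : ℕ) : Dy k ^ a * Dx k ^ b ∈ Mle k i0 :=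
  Submodule.subset_span ⟨a, h, b, rfl⟩

lemma Mle_mono {i0 i1 : ℕ} (h : i0 ≤ i1) : Mle k i0 ≤ Mle k i1 :=
  Submodule.span_mono (fun d ⟨a, ha, b, hb⟩ => ⟨a, ha.trans h, b, hb⟩)

lemma xMono : ∀ a b : ℕ, Dx k * (Dy k ^ a * Dx k ^ b) ∈ Mle k a := by
  intro a
  induction a using Nat.strong_induction_on with
  | _ a ih =>
    match a with
    | 0 =>
      intro b
      rw [pow_zero, one_mul, ← pow_succ']
      have : Dx k ^ (b + 1) = Dy k ^ 0 * Dx k ^ (b + 1) := by rw [pow_zero, one_mul]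
      rw [this]
      exact mem_Mle (le_refl 0) (b + 1)
    | a + 1 =>
      intro b
      have key : Dx k * (Dy k ^ (a + 1) * Dx k ^ b)
          = Dy k * (Dx k * (Dy k ^ a * Dx k ^ b))
            + (1 / 2 : k) • (Dx k * (Dx k * (Dy k ^ a * Dx k ^ b))) := by
        rw [pow_succ' (Dy k) a]
        have h1 : Dx k * (Dy k * Dy k ^ a * Dx k ^ b)
            = (Dx k * Dy k) * (Dy k ^ a * Dx k ^ b) := by noncomm_ring
        rw [h1, rel_xy, add_mul, smul_mul_assoc]
        noncomm_ring
      rw [key]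
      have ht : Dx k * (Dy k ^ a * Dx k ^ b) ∈ Mle k a := ih a (Nat.lt_succ_self a) b
      refine add_mem ?_ (Submodule.smul_mem _ _ ?_)
      · refine mulLeft_span (fun d hd => ?_) ht
        obtain ⟨a', ha', b', rfl⟩ := hd
        rw [← mul_assoc, ← pow_succ']
        exact mem_Mle (Nat.succ_le_succ ha') b'
      · refine Mle_mono (Nat.le_succ a) (mulLeft_span (fun d hd => ?_) ht)
        obtain ⟨a', ha', b', rfl⟩ := hd
        exact Mle_mono ha' (ih a' (by omega) b')

variable (k n m) in
def evT : D k →ₗ[k] Tmod k n m where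
  toFun d := d • Tgen k n m
  map_add' a b := add_smul a b _
  map_smul' c d := by simp only [RingHom.id_apply]; exact smul_assoc c d _

lemma Mle_smul_z {i0 : ℕ} {w : D k} (hw : w ∈ Mle k i0) : w • Tgen k n m ∈ Sp k n m := by
  have hle : Mle k i0 ≤ Submodule.comap (evT k n m) (Sp k n m) := by
    refine Submodule.span_le.mpr ?_
    rintro d ⟨a, ha, b, rfl⟩
    exact Submodule.mem_comap.mpr (mono_mem a b)
  exact hle hw

lemma CX {w : Tmod k n m} (hw : w ∈ Sp k n m) : Dx k • w ∈ Sp k n m := by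
  refine Dsmul_mem (fun i j => ?_) hw
  rw [← mul_smul]
  exact Mle_smul_z (xMono i j)

lemma two_smul_mem {w : Tmod k n m} (hw : w ∈ Sp k n m) : (2 : D k) • w ∈ Sp k n m := by
  rw [show (2 : D k) = ((2 : ℕ) : D k) by norm_num, Nat.cast_smul_eq_nsmul, two_nsmul]
  exact add_mem hw hw

lemma g_xpow (b : ℕ) : Dg k * Dx k ^ b = Dx k ^ b * Dg k := by
  induction b with
  | zero => simp
  | succ b ihb =>
    rw [pow_succ', ← mul_assoc, rel_gx, mul_assoc, ihb, ← mul_assoc, ← pow_succ']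

lemma CGmono (i j : ℕ) : Dg k • ((Dy k ^ i * Dx k ^ j) • Tgen k n m) ∈ Sp k n m := by
  induction i with
  | zero =>
    rw [pow_zero, one_mul, ← mul_smul, g_xpow, mul_smul, g_z]
    have := mono_mem (k := k) (n := n) (m := m) 0 j
    rwa [pow_zero, one_mul] at this
  | succ i ihi =>
    have hsplit : (Dy k ^ (i + 1) * Dx k ^ j) • Tgen k n m
        = Dy k • ((Dy k ^ i * Dx k ^ j) • Tgen k n m) := by
      rw [← mul_smul, ← mul_assoc, ← pow_succ']
    rw [hsplit, ← mul_smul, rel_gy, add_smul, mul_smul (Dy k) (Dg k), mul_smul (Dx k) (Dg k)]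
    exact add_mem (CY ihi) (CX ihi)

lemma CG {w : Tmod k n m} (hw : w ∈ Sp k n m) : Dg k • w ∈ Sp k n m :=
  Dsmul_mem CGmono hw

lemma CXimono (i j : ℕ) : Dxi k • ((Dy k ^ i * Dx k ^ j) • Tgen k n m) ∈ Sp k n m := by
  induction i with
  | zero =>
    rw [pow_zero, one_mul]
    induction j with
    | zero =>
      rw [pow_zero, one_smul, xi_z]
      refine nsmul_mem ?_ _
      have := mono_mem (k := k) (n := n) (m := m) 0 0
      rwa [pow_zero, one_mul, pow_zero, one_smul] at this
    | succ j ihj =>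
      have hxj : (Dx k ^ j) • Tgen k n m ∈ Sp k n m := by
        have := mono_mem (k := k) (n := n) (m := m) 0 j
        rwa [pow_zero, one_mul] at this
      rw [pow_succ', mul_smul (Dx k) (Dx k ^ j), ← mul_smul (Dxi k) (Dx k), rel_xix, sub_smul,
        mul_smul (Dx k) (Dxi k), mul_smul 2 (Dx k)]
      exact sub_mem (CX ihj) (two_smul_mem (CX hxj))
  | succ i ihi =>
    have hsplit : (Dy k ^ (i + 1) * Dx k ^ j) • Tgen k n m
        = Dy k • ((Dy k ^ i * Dx k ^ j) • Tgen k n m) := by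
      rw [← mul_smul, ← mul_assoc, ← pow_succ']
    rw [hsplit, ← mul_smul (Dxi k) (Dy k), rel_xiy, sub_smul, mul_smul (Dy k) (Dxi k),
      mul_smul 2 (Dy k)]
    exact sub_mem (CY ihi) (two_smul_mem (CY (mono_mem i j)))

lemma CXi {w : Tmod k n m} (hw : w ∈ Sp k n m) : Dxi k • w ∈ Sp k n m :=
  Dsmul_mem CXimono hw

lemma CUmono (i j : ℕ) : Du k • ((Dy k ^ i * Dx k ^ j) • Tgen k n m) ∈ Sp k n m := by
  induction i with
  | zero =>
    rw [pow_zero, one_mul]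
    induction j with
    | zero => rw [pow_zero, one_smul, u_z]; exact zero_mem _
    | succ j ihj =>
      rw [pow_succ', mul_smul (Dx k) (Dx k ^ j), ← mul_smul (Du k) (Dx k), rel_ux,
        mul_smul (Dx k) (Du k)]
      exact CX ihj
  | succ i ihi =>
    have hsplit : (Dy k ^ (i + 1) * Dx k ^ j) • Tgen k n m
        = Dy k • ((Dy k ^ i * Dx k ^ j) • Tgen k n m) := by
      rw [← mul_smul, ← mul_assoc, ← pow_succ']
    rw [hsplit, ← mul_smul (Du k) (Dy k), rel_uy, add_smul, mul_smul (Dy k) (Du k), sub_smul,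
      one_smul]
    exact add_mem (CY ihi) (sub_mem (mono_mem i j) (CGmono i j))

lemma CU {w : Tmod k n m} (hw : w ∈ Sp k n m) : Du k • w ∈ Sp k n m :=
  Dsmul_mem CUmono hw

lemma CVmono (i j : ℕ) : Dv k • ((Dy k ^ i * Dx k ^ j) • Tgen k n m) ∈ Sp k n m := by
  induction i with
  | zero =>
    rw [pow_zero, one_mul]
    induction j with
    | zero => rw [pow_zero, one_smul, v_z]; exact zero_mem _
    | succ j ihj =>
      have hxj : (Dx k ^ j) • Tgen k n m ∈ Sp k n m := by
        have := mono_mem (k := k) (n := n) (m := m) 0 j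
        rwa [pow_zero, one_mul] at this
      rw [pow_succ', mul_smul (Dx k) (Dx k ^ j), ← mul_smul (Dv k) (Dx k), rel_vx, add_smul,
        add_smul, mul_smul (Dx k) (Dv k), sub_smul, one_smul, mul_smul (Dx k) (Du k)]
      exact add_mem (add_mem (CX ihj) (sub_mem hxj (CG hxj))) (CX (CU hxj))
  | succ i ihi =>
    have hsplit : (Dy k ^ (i + 1) * Dx k ^ j) • Tgen k n m
        = Dy k • ((Dy k ^ i * Dx k ^ j) • Tgen k n m) := by
      rw [← mul_smul, ← mul_assoc, ← pow_succ']
    rw [hsplit, ← mul_smul (Dv k) (Dy k), rel_vy, add_smul, add_smul, smul_assoc,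
      mul_smul (Dy k) (Dv k), mul_smul (Dg k) (Dxi k), mul_smul (Dy k) (Du k)]
    exact add_mem (add_mem (CY ihi) (Submodule.smul_mem _ _ (CG (CXi (mono_mem i j)))))
      (CY (CU (mono_mem i j)))

lemma CV {w : Tmod k n m} (hw : w ∈ Sp k n m) : Dv k • w ∈ Sp k n m :=
  Dsmul_mem CVmono hw

lemma CGi {w : Tmod k n m} (hw : w ∈ Sp k n m) : Dginv k • w ∈ Sp k n m := by
  have hfd : FiniteDimensional k (Sp k n m) :=
    FiniteDimensional.span_of_finite k (Set.finite_range (fam k n m))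
  let glin : Sp k n m →ₗ[k] Sp k n m :=
    (DsmulL k n m (Dg k)).restrict (p := Sp k n m) (q := Sp k n m) (fun w hw => CG hw)
  have hinj : Function.Injective glin := by
    intro w1 w2 h
    have hval : Dg k • (w1 : Tmod k n m) = Dg k • (w2 : Tmod k n m) :=
      congrArg Subtype.val h
    have : Dginv k • (Dg k • (w1 : Tmod k n m)) = Dginv k • (Dg k • (w2 : Tmod k n m)) := by
      rw [hval]
    rw [← mul_smul, ← mul_smul, rel_gig, one_smul, one_smul] at this
    exact Subtype.ext this
  have hsurj := (LinearMap.injective_iff_surjective).mp hinj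
  obtain ⟨w', hsw⟩ := hsurj ⟨w, hw⟩
  have : Dg k • (w' : Tmod k n m) = w := congrArg Subtype.val hsw
  have h2 : Dginv k • w = (w' : Tmod k n m) := by
    rw [← this, ← mul_smul, rel_gig, one_smul]
  rw [h2]
  exact w'.2

lemma span_fam_top : Submodule.span k (Set.range (fam k n m)) = ⊤ := by
  rw [show Submodule.span k (Set.range (fam k n m)) = Sp k n m from rfl]
  rw [eq_top_iff]
  rintro t -
  obtain ⟨d, rfl⟩ := Submodule.mkQ_surjective (Jideal k n m) t
  rw [Submodule.mkQ_apply, ← smul_Tgen]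
  obtain ⟨a, rfl⟩ := RingQuot.mkAlgHom_surjective k (DRel k) d
  have hz : Tgen k n m ∈ Sp k n m := by
    have := mono_mem (k := k) (n := n) (m := m) 0 0
    rwa [pow_zero, one_mul, pow_zero, one_smul] at this
  refine FreeAlgebra.induction k DGen
    (motive := fun a => ∀ w ∈ Sp k n m, RingQuot.mkAlgHom k (DRel k) a • w ∈ Sp k n m)
    ?_ ?_ ?_ ?_ a _ hz
  · intro r w hw
    rw [AlgHom.commutes, algebraMap_smul]
    exact Submodule.smul_mem _ _ hw
  · intro g w hw
    cases g
    · exact CU hw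
    · exact CV hw
    · exact CXi hw
    · exact CG hw
    · exact CGi hw
    · exact CX hw
    · exact CY hw
  · intro a b ha hb w hw
    rw [map_mul, mul_smul]
    exact ha _ (hb w hw)
  · intro a b ha hb w hw
    rw [map_add, add_smul]
    exact add_mem (ha w hw) (hb w hw)


end TB

open TB in
/-- The set `{yⁱxʲ·z : 0 ≤ j ≤ m, 0 ≤ i ≤ n + 2(m−j)}` is a `k`-basis of
`T(n,m)`; in particular `dim T(n,m) = (m+1)(n+m+1)`. -/
theorem Tmod_basis (k : Type) [Field k] [IsAlgClosed k] [CharZero k] (n m : ℕ) :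
    (∃ B : Module.Basis {p : ℕ × ℕ // p.2 ≤ m ∧ p.1 ≤ n + 2 * (m - p.2)} k (Tmod k n m),
      ∀ p, B p = (Dy k ^ (p : ℕ × ℕ).1 * Dx k ^ (p : ℕ × ℕ).2) • Tgen k n m) ∧
    Module.finrank k (Tmod k n m) = (m + 1) * (n + m + 1) := by
  classical
  set lsumT : ({p : ℕ × ℕ // p.2 ≤ m ∧ p.1 ≤ n + 2 * (m - p.2)} →₀ k) →ₗ[k] Tmod k n m :=
    Finsupp.lsum k fun s => LinearMap.toSpanSingleton k _ (fam k n m s) with hlsumT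
  have hT : Function.Surjective lsumT := by
    rw [← LinearMap.range_eq_top, eq_top_iff, ← span_fam_top (k := k) (n := n) (m := m)]
    refine Submodule.span_le.mpr ?_
    rintro x ⟨s, rfl⟩
    exact ⟨Finsupp.single s 1, by
      rw [hlsumT, Finsupp.lsum_single, LinearMap.toSpanSingleton_apply, one_smul]⟩
  have hfin : Module.Finite k (Tmod k n m) := Module.Finite.of_surjective lsumT hT
  have hle1 : Module.finrank k (Tmod k n m) ≤ (m + 1) * (n + m + 1) := by
    have h := LinearMap.finrank_range_le lsumT
    rw [LinearMap.range_eq_top.mpr hT, finrank_top, Module.finrank_finsupp_self,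
      card_sidx] at h
    exact h
  have hle2 : (m + 1) * (n + m + 1) ≤ Module.finrank k (Tmod k n m) := by
    have h := LinearMap.finrank_range_le (psi k n m)
    rw [LinearMap.range_eq_top.mpr (psi_surj (k := k) (n := n) (m := m)), finrank_top,
      finrank_Q] at h
    exact h
  have hrank : Module.finrank k (Tmod k n m) = (m + 1) * (n + m + 1) :=
    le_antisymm hle1 hle2
  have hcard : Fintype.card {p : ℕ × ℕ // p.2 ≤ m ∧ p.1 ≤ n + 2 * (m - p.2)}
      = Module.finrank k (Tmod k n m) := by
    rw [card_sidx, hrank]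
  refine ⟨⟨basisOfTopLeSpanOfCardEqFinrank (fam k n m)
      (le_of_eq (span_fam_top (k := k) (n := n) (m := m)).symm) hcard, fun p => ?_⟩, hrank⟩
  rw [coe_basisOfTopLeSpanOfCardEqFinrank]
  rfl
end
end

section
/- In the 𝒟-module T(n,m), for every j with 0 ≤ j ≤ m and every i with 0 ≤ i ≤ n + 2(m−j), one has v^i·(y^i x^j·z) = ((i!)²/2^i)·binom(n + 2(m−j), i)·(x^j·z). -/
/-!
We formalize the double of the Jordan plane `𝒟` (Andruskiewitsch–Peña Pollastri) as the
quotient of the free algebra on generators `u, v, ξ, g, g⁻¹, x, y` by the defining relations.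
-/

noncomputable section

open FreeAlgebra

variable (k : Type) [Field k]

variable {k}

section Development

variable {k : Type} [Field k] {n m : ℕ}

/-! ### Relations in `D` -/

lemma rel_gx : Dg k * Dx k = Dx k * Dg k := by
  have h := RingQuot.mkAlgHom_rel k (DRel.g_x (k := k))
  simpa [Dg, Dx, map_mul] using h

lemma rel_gy : Dg k * Dy k = Dy k * Dg k + Dx k * Dg k := by
  have h := RingQuot.mkAlgHom_rel k (DRel.g_y (k := k))
  simpa [Dg, Dy, Dx, map_mul, map_add] using h

lemma rel_xix : Dxi k * Dx k = Dx k * Dxi k - 2 * Dx k := by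
  have h := RingQuot.mkAlgHom_rel k (DRel.xi_x (k := k))
  simpa [Dxi, Dx, map_mul, map_sub, map_ofNat] using h

lemma rel_xiy : Dxi k * Dy k = Dy k * Dxi k - 2 * Dy k := by
  have h := RingQuot.mkAlgHom_rel k (DRel.xi_y (k := k))
  simpa [Dxi, Dy, map_mul, map_sub, map_ofNat] using h

lemma rel_ux : Du k * Dx k = Dx k * Du k := by
  have h := RingQuot.mkAlgHom_rel k (DRel.u_x (k := k))
  simpa [Du, Dx, map_mul] using h

lemma rel_uy : Du k * Dy k = Dy k * Du k + (1 - Dg k) := by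
  have h := RingQuot.mkAlgHom_rel k (DRel.u_y (k := k))
  simpa [Du, Dy, Dg, map_mul, map_add, map_sub, map_one] using h

lemma rel_vx : Dv k * Dx k = Dx k * Dv k + (1 - Dg k) + Dx k * Du k := by
  have h := RingQuot.mkAlgHom_rel k (DRel.v_x (k := k))
  simpa [Dv, Dx, Dg, Du, map_mul, map_add, map_sub, map_one] using h

lemma rel_vy : Dv k * Dy k = Dy k * Dv k + (1/2 : k) • (Dg k * Dxi k) + Dy k * Du k := by
  have h := RingQuot.mkAlgHom_rel k (DRel.v_y (k := k))
  simpa [Dv, Dy, Dg, Dxi, Du, map_mul, map_add, map_smul] using h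

lemma rel_yx : Dy k * Dx k = Dx k * Dy k - (1/2 : k) • (Dx k * Dx k) := by
  have h := RingQuot.mkAlgHom_rel k (DRel.y_x (k := k))
  simpa [Dy, Dx, map_mul, map_sub, map_smul] using h

lemma rel_xy : Dx k * Dy k = Dy k * Dx k + (1/2 : k) • (Dx k * Dx k) := by
  rw [rel_yx]; abel

/-! ### Scalar helpers -/

lemma dksmul (d : D k) (r : k) (t : Tmod k n m) : d • (r • t) = r • (d • t) := by
  rw [← algebraMap_smul (D k) r t, ← mul_smul, ← Algebra.commutes, mul_smul, algebraMap_smul]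

lemma two_dsmul (t : Tmod k n m) : (2 : D k) • t = (2 : k) • t := by
  rw [show (2 : D k) = algebraMap k (D k) (2 : k) by rw [map_ofNat], algebraMap_smul]

lemma sub_ksmul (r s : k) (t : Tmod k n m) : r • t - s • t = (r - s) • t :=
  (sub_smul r s t).symm

lemma ksmul_dist (r s : k) (t f : Tmod k n m) : r • (s • (t + f)) = (r*s) • t + (r*s) • f :=
  (smul_smul r s (t+f)).trans (smul_add (r*s) t f)

lemma Tsmul_smul (r s : k) (t : Tmod k n m) : r • s • t = (r*s) • t := smul_smul r s t

lemma Tadd_smul (r s : k) (t : Tmod k n m) : (r+s) • t = r • t + s • t := add_smul r s t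

lemma Tsmul_zero (r : k) : r • (0 : Tmod k n m) = 0 := by exact smul_zero (A := Tmod k n m) r

/-! ### Generic commutation rules for the action on `Tmod` -/

lemma g_smul_x (t : Tmod k n m) : Dg k • (Dx k • t) = Dx k • (Dg k • t) := by
  rw [← mul_smul, rel_gx, mul_smul]

lemma xi_smul_x (t : Tmod k n m) :
    Dxi k • (Dx k • t) = Dx k • (Dxi k • t) - (2 : k) • (Dx k • t) := by
  rw [← mul_smul, rel_xix, sub_smul, mul_smul, mul_smul, two_dsmul]

lemma u_smul_x (t : Tmod k n m) : Du k • (Dx k • t) = Dx k • (Du k • t) := by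
  rw [← mul_smul, rel_ux, mul_smul]

lemma v_smul_x (t : Tmod k n m) :
    Dv k • (Dx k • t) = Dx k • (Dv k • t) + (t - Dg k • t) + Dx k • (Du k • t) := by
  rw [← mul_smul, rel_vx, add_smul, add_smul, sub_smul, one_smul, mul_smul, mul_smul]

lemma g_smul_y (t : Tmod k n m) :
    Dg k • (Dy k • t) = Dy k • (Dg k • t) + Dx k • (Dg k • t) := by
  rw [← mul_smul, rel_gy, add_smul, mul_smul, mul_smul]

lemma xi_smul_y (t : Tmod k n m) :
    Dxi k • (Dy k • t) = Dy k • (Dxi k • t) - (2 : k) • (Dy k • t) := by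
  rw [← mul_smul, rel_xiy, sub_smul, mul_smul, mul_smul, two_dsmul]

lemma u_smul_y (t : Tmod k n m) :
    Du k • (Dy k • t) = Dy k • (Du k • t) + (t - Dg k • t) := by
  rw [← mul_smul, rel_uy, add_smul, mul_smul, sub_smul, one_smul]

lemma v_smul_y (t : Tmod k n m) :
    Dv k • (Dy k • t) = Dy k • (Dv k • t) + (1/2 : k) • (Dg k • (Dxi k • t))
      + Dy k • (Du k • t) := by
  rw [← mul_smul, rel_vy, add_smul, add_smul, mul_smul, mul_smul, smul_assoc, mul_smul]

lemma x_smul_y (t : Tmod k n m) :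
    Dx k • (Dy k • t) = Dy k • (Dx k • t) + (1/2 : k) • (Dx k • (Dx k • t)) := by
  rw [← mul_smul, rel_xy, add_smul, mul_smul, smul_assoc, mul_smul]

/-! ### Action on the generator -/

lemma hzJ (d : D k) (hd : d ∈ Jideal k n m) : d • Tgen k n m = 0 := by
  rw [Tgen, ← Submodule.Quotient.mk_smul, smul_eq_mul, mul_one, Submodule.Quotient.mk_eq_zero]
  exact hd

lemma hz_g : Dg k • Tgen k n m = Tgen k n m := by
  have h := hzJ (n := n) (m := m) (Dg k - 1) (Submodule.subset_span (Or.inl (by simp)))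
  rwa [sub_smul, one_smul, sub_eq_zero] at h

lemma hz_xi : Dxi k • Tgen k n m = ((n : k) + 2 * m) • Tgen k n m := by
  have h := hzJ (n := n) (m := m) (Dxi k - ((n + 2*m : ℕ) : D k))
    (Submodule.subset_span (Or.inl (by simp)))
  rw [sub_smul, sub_eq_zero] at h
  rw [h, show ((n + 2*m : ℕ) : D k) = algebraMap k (D k) ((n : k) + 2 * m) by push_cast; rfl,
    algebraMap_smul]

lemma hz_u : Du k • Tgen k n m = 0 :=
  hzJ _ (Submodule.subset_span (Or.inl (by simp)))

lemma hz_v : Dv k • Tgen k n m = 0 :=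
  hzJ _ (Submodule.subset_span (Or.inl (by simp)))

/-! ### The elements `w b c` and the filtration `F B` -/

variable (k n m) in
def wT (b c : ℕ) : Tmod k n m := (Dy k ^ b * Dx k ^ c) • Tgen k n m

variable (k n m) in
def FT (B : ℕ) : Submodule k (Tmod k n m) :=
  Submodule.span k {t | ∃ b ≤ B, ∃ c, t = wT k n m b c}

variable (k n m) in
def FTl : ℕ → Submodule k (Tmod k n m)
  | 0 => ⊥
  | (b+1) => FT k n m b

lemma FTl_zero : FTl k n m 0 = ⊥ := rfl
lemma FTl_succ (b : ℕ) : FTl k n m (b+1) = FT k n m b := rfl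

lemma wT_succ (b c : ℕ) : wT k n m (b+1) c = Dy k • wT k n m b c := by
  rw [wT, wT, pow_succ', mul_assoc, mul_smul]

lemma wT_zero (c : ℕ) : wT k n m 0 c = Dx k ^ c • Tgen k n m := by
  rw [wT, pow_zero, one_mul]

lemma x_smul_w0 (c : ℕ) : Dx k • wT k n m 0 c = wT k n m 0 (c+1) := by
  rw [wT_zero, wT_zero, ← mul_smul, ← pow_succ']

lemma wT_mem_F {b B : ℕ} (h : b ≤ B) (c : ℕ) : wT k n m b c ∈ FT k n m B :=
  Submodule.subset_span ⟨b, h, c, rfl⟩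

lemma FT_mono {B B' : ℕ} (h : B ≤ B') : FT k n m B ≤ FT k n m B' :=
  Submodule.span_mono (fun t ⟨b, hb, c, e⟩ => ⟨b, hb.trans h, c, e⟩)

lemma smul_FT {d : D k} {B B' : ℕ} (h : ∀ b ≤ B, ∀ c, d • wT k n m b c ∈ FT k n m B') :
    ∀ t ∈ FT k n m B, d • t ∈ FT k n m B' := by
  intro t ht
  induction ht using Submodule.span_induction with
  | mem x hx => obtain ⟨b, hb, c, rfl⟩ := hx; exact h b hb c
  | zero => rw [smul_zero]; exact zero_mem _
  | add x y _ _ hx hy => rw [smul_add]; exact add_mem hx hy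
  | smul r x _ hx => rw [dksmul]; exact Submodule.smul_mem _ r hx

lemma y_smul_FT {B : ℕ} : ∀ t ∈ FT k n m B, Dy k • t ∈ FT k n m (B+1) :=
  smul_FT (fun b hb c => by rw [← wT_succ]; exact wT_mem_F (by omega) c)

lemma FTl_le' {b B : ℕ} (h : b ≤ B + 1) : FTl k n m b ≤ FT k n m B := by
  match b with
  | 0 => exact bot_le
  | b+1 => rw [FTl_succ]; exact FT_mono (by omega)

lemma y_smul_FTl {b : ℕ} {t : Tmod k n m} (ht : t ∈ FTl k n m b) :
    Dy k • t ∈ FTl k n m (b+1) := by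
  match b with
  | 0 => rw [FTl_zero, Submodule.mem_bot] at ht; rw [ht, smul_zero]; exact zero_mem _
  | b+1 => rw [FTl_succ] at ht ⊢; exact y_smul_FT t ht

/-! ### Action of the generators on `x^c • z` -/

lemma hg_xc (c : ℕ) : Dg k • (Dx k ^ c • Tgen k n m) = Dx k ^ c • Tgen k n m := by
  induction c with
  | zero => simpa using hz_g
  | succ c ih => rw [pow_succ', mul_smul, g_smul_x, ih]

lemma hu_xc (c : ℕ) : Du k • (Dx k ^ c • Tgen k n m) = 0 := by
  induction c with
  | zero => simpa only [pow_zero, one_smul] using hz_u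
  | succ c ih => rw [pow_succ', mul_smul, u_smul_x, ih, smul_zero]

lemma hxi_xc (c : ℕ) :
    Dxi k • (Dx k ^ c • Tgen k n m) = ((n : k) + 2*m - 2*c) • (Dx k ^ c • Tgen k n m) := by
  induction c with
  | zero => simpa using hz_xi
  | succ c ih =>
    rw [pow_succ', mul_smul, xi_smul_x, ih, dksmul, ← mul_smul, ← pow_succ', sub_ksmul]
    congr 1
    push_cast; ring

lemma hv_xc (c : ℕ) : Dv k • (Dx k ^ c • Tgen k n m) = 0 := by
  induction c with
  | zero => simpa only [pow_zero, one_smul] using hz_v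
  | succ c ih =>
    rw [pow_succ', mul_smul, v_smul_x, ih, hg_xc, hu_xc, smul_zero]
    abel

/-! ### `ξ` acts diagonally -/

lemma hxi_w (b c : ℕ) :
    Dxi k • wT k n m b c = ((n : k) + 2*m - 2*b - 2*c) • wT k n m b c := by
  induction b with
  | zero => rw [wT_zero, hxi_xc]; congr 1; push_cast; ring
  | succ b ih =>
    rw [wT_succ, xi_smul_y, ih, dksmul, ← wT_succ, sub_ksmul]
    congr 1
    push_cast; ring

/-! ### `x` preserves the filtration -/

lemma hx_w : ∀ b c, Dx k • wT k n m b c ∈ FT k n m b := by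
  intro b
  induction b using Nat.strong_induction_on with
  | _ b ih =>
  match b, ih with
  | 0, _ =>
    intro c
    rw [x_smul_w0]
    exact wT_mem_F le_rfl _
  | b + 1, ih =>
    intro c
    rw [wT_succ, x_smul_y]
    refine add_mem (y_smul_FT _ (ih b (Nat.lt_succ_self b) c)) (Submodule.smul_mem _ _ ?_)
    refine FT_mono (Nat.le_succ b)
      (smul_FT (fun b' hb' c' => FT_mono hb' (ih b' (Nat.lt_succ_of_le hb') c')) _
        (ih b (Nat.lt_succ_self b) c))

/-! ### `g` acts as identity modulo lower filtration -/

lemma hg_w0 (c : ℕ) : Dg k • wT k n m 0 c = wT k n m 0 c := by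
  rw [wT_zero]; exact hg_xc c

lemma hg_w : ∀ b c, ∃ f ∈ FT k n m b, Dg k • wT k n m (b+1) c = wT k n m (b+1) c + f := by
  intro b
  induction b with
  | zero =>
    intro c
    refine ⟨Dx k • wT k n m 0 c, hx_w 0 c, ?_⟩
    rw [wT_succ, g_smul_y, hg_w0, ← wT_succ]
  | succ b ih =>
    intro c
    obtain ⟨f, hf, he⟩ := ih c
    refine ⟨Dy k • f + (Dx k • wT k n m (b+1) c + Dx k • f), ?_, ?_⟩
    · exact add_mem (y_smul_FT _ hf)
        (add_mem (hx_w (b+1) c)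
          (FT_mono (Nat.le_succ b)
            (smul_FT (fun b' hb' c' => FT_mono hb' (hx_w b' c')) _ hf)))
    · rw [wT_succ (b+1), g_smul_y, he, smul_add, smul_add, ← wT_succ]
      abel

/-! ### `u` lowers the filtration by two -/

lemma hu_w0 (c : ℕ) : Du k • wT k n m 0 c = 0 := by rw [wT_zero]; exact hu_xc c

lemma hu_w1 (c : ℕ) : Du k • wT k n m 1 c = 0 := by
  rw [wT_succ, u_smul_y, hu_w0, smul_zero, hg_w0]
  abel

lemma hu_w : ∀ b c, Du k • wT k n m (b+1) c ∈ FTl k n m b := by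
  intro b
  induction b with
  | zero =>
    intro c
    rw [hu_w1]
    exact zero_mem _
  | succ b ih =>
    intro c
    obtain ⟨f, hf, he⟩ := hg_w (k := k) (n := n) (m := m) b c
    rw [wT_succ (b+1), u_smul_y, he, FTl_succ]
    have h1 : Dy k • (Du k • wT k n m (b+1) c) ∈ FT k n m b := by
      have := y_smul_FTl (ih c)
      rwa [FTl_succ] at this
    have h2 : wT k n m (b+1) c - (wT k n m (b+1) c + f) = -f := by abel
    rw [h2]
    exact add_mem h1 (neg_mem hf)

/-! ### The action of `v` -/

variable (k n m) in
def gam (b c : ℕ) : k := ((b : k) + 1)/2 * ((n : k) + 2*m - 2*c - b)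

lemma hv_w0 (c : ℕ) : Dv k • wT k n m 0 c = 0 := by rw [wT_zero]; exact hv_xc c

lemma hv_key : ∀ b c, ∃ f ∈ FTl k n m b,
    Dv k • wT k n m (b+1) c = gam k n m b c • wT k n m b c + f := by
  intro b
  induction b with
  | zero =>
    intro c
    refine ⟨0, zero_mem _, ?_⟩
    rw [add_zero, wT_succ, v_smul_y, hv_w0, hu_w0, smul_zero, hxi_w,
      dksmul (Dg k), hg_w0, Tsmul_smul]
    have hco : 1/2 * ((n : k) + 2*m - 2*((0:ℕ) : k) - 2*c) = gam k n m 0 c := by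
      rw [gam]; push_cast; ring
    rw [hco]
    abel
  | succ b ih =>
    intro c
    obtain ⟨f₁, hf₁, he₁⟩ := ih c
    obtain ⟨f₂, hf₂, he₂⟩ := hg_w (k := k) (n := n) (m := m) b c
    have hu' : Dy k • (Du k • wT k n m (b+1) c) ∈ FT k n m b := by
      have := y_smul_FTl (hu_w (k:=k) (n:=n) (m:=m) b c)
      rwa [FTl_succ] at this
    refine ⟨Dy k • f₁ + (1/2 * ((n : k) + 2*m - 2*((b+1 : ℕ) : k) - 2*c)) • f₂
        + Dy k • (Du k • wT k n m (b+1) c), ?_, ?_⟩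
    · rw [FTl_succ]
      exact add_mem (add_mem ((FTl_le' le_rfl) (y_smul_FTl hf₁)) (Submodule.smul_mem _ _ hf₂))
        hu'
    · have hco : gam k n m b c + 1/2 * ((n : k) + 2*m - 2*((b+1 : ℕ) : k) - 2*c)
          = gam k n m (b+1) c := by
        rw [gam, gam]; push_cast; ring
      rw [wT_succ (b+1), v_smul_y, he₁, smul_add (Dy k), dksmul (Dy k), ← wT_succ,
        hxi_w, dksmul (Dg k), he₂, ksmul_dist, ← hco, Tadd_smul]
      abel

lemma hv_F {B : ℕ} : ∀ t ∈ FT k n m (B+1), Dv k • t ∈ FT k n m B := by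
  refine smul_FT (fun b hb c => ?_)
  match b with
  | 0 => rw [hv_w0]; exact zero_mem _
  | b+1 =>
    obtain ⟨f, hf, he⟩ := hv_key (k := k) (n := n) (m := m) b c
    rw [he]
    exact add_mem (Submodule.smul_mem _ _ (wT_mem_F (by omega) c)) (FTl_le' (by omega) hf)

lemma hv_F0 : ∀ t ∈ FT k n m 0, Dv k • t = 0 := by
  intro t ht
  induction ht using Submodule.span_induction with
  | mem x hx =>
    obtain ⟨b, hb, c, rfl⟩ := hx
    interval_cases b
    exact hv_w0 c
  | zero => rw [smul_zero]
  | add x y _ _ hx hy => rw [smul_add, hx, hy, add_zero]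
  | smul r x _ hx => rw [dksmul, hx, Tsmul_zero]

lemma hv_pow : ∀ s, ∀ t ∈ FT k n m s, Dv k ^ (s+1) • t = 0 := by
  intro s
  induction s with
  | zero => intro t ht; rw [pow_one]; exact hv_F0 t ht
  | succ s ih =>
    intro t ht
    rw [pow_succ, mul_smul]
    exact ih _ (hv_F t ht)

lemma hv_pow_l : ∀ b, ∀ t ∈ FTl k n m b, Dv k ^ b • t = 0 := by
  intro b t ht
  match b with
  | 0 => rw [FTl_zero, Submodule.mem_bot] at ht; rw [ht, smul_zero]
  | b+1 => rw [FTl_succ] at ht; exact hv_pow b t ht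

end Development

/-- In `T(n,m)`, for `0 ≤ j ≤ m` and `0 ≤ i ≤ n + 2(m−j)` one has
`vⁱ·(yⁱxʲ·z) = ((i!)²/2ⁱ)·C(n+2(m−j), i)·(xʲ·z)`. -/
theorem v_pow_action_on_Tnm (k : Type) [Field k] [IsAlgClosed k] [CharZero k] (n m : ℕ) :
    ∀ j ≤ m, ∀ i ≤ n + 2 * (m - j),
      Dv k ^ i • ((Dy k ^ i * Dx k ^ j) • Tgen k n m) =
        (((Nat.factorial i : k) ^ 2 / 2 ^ i) * ((n + 2 * (m - j)).choose i : k)) •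
          (Dx k ^ j • Tgen k n m) := by
  intro j hj i
  set N := n + 2 * (m - j) with hNdef
  have hN : (N : k) = (n : k) + 2*m - 2*j := by
    rw [hNdef]
    push_cast [Nat.cast_sub hj]
    ring
  induction i with
  | zero =>
    intro _
    simp only [pow_zero, one_mul, Nat.factorial_zero, Nat.cast_one, Nat.choose_zero_right,
      one_pow, one_smul]
    rw [show ((1:k)/1 * 1) = 1 by norm_num]
    exact (one_smul k (Dx k ^ j • Tgen k n m)).symm
  | succ s ih =>
    intro hi
    have hs : s ≤ N := Nat.le_of_succ_le hi
    obtain ⟨f, hf, he⟩ := hv_key (k := k) (n := n) (m := m) s j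
    have hLHS : Dv k ^ (s+1) • ((Dy k ^ (s+1) * Dx k ^ j) • Tgen k n m)
        = (gam k n m s j * ((Nat.factorial s : k) ^ 2 / 2 ^ s * (N.choose s : k)))
          • (Dx k ^ j • Tgen k n m) := by
      show Dv k ^ (s+1) • wT k n m (s+1) j = _
      rw [pow_succ, mul_smul, he, smul_add, hv_pow_l s f hf, add_zero, dksmul]
      have hih := ih hs
      rw [show ((Dy k ^ s * Dx k ^ j) • Tgen k n m) = wT k n m s j from rfl] at hih
      rw [hih, Tsmul_smul]
    rw [hLHS]
    congr 1
    have hchoose : (N.choose (s+1) : k) * ((s : k) + 1) = (N.choose s : k) * ((N : k) - s) := by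
      have h : ((N.choose (s+1) * (s+1) : ℕ) : k) = ((N.choose s * (N - s) : ℕ) : k) := by
        rw [Nat.choose_succ_right_eq]
      push_cast [Nat.cast_sub hs] at h
      exact h
    have hne : ((s : k) + 1) ≠ 0 := by
      exact_mod_cast Nat.cast_add_one_ne_zero (R := k) s
    have hc' : (N.choose (s+1) : k) = (N.choose s : k) * ((N : k) - s) / ((s : k) + 1) := by
      rw [eq_div_iff hne]
      exact hchoose
    rw [hc', gam, hN, Nat.factorial_succ]
    push_cast
    field_simp
    ring
end
end

section
/- Let n, m ∈ ℕ₀. If there exists a non-split short exact sequence of 𝒟-modules 0 → L(n) → T → L(m) → 0, then m − n ∈ {−2, 0, 2}. -/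
/-!
We formalize the double of the Jordan plane `𝒟` (Andruskiewitsch–Peña Pollastri) as the
quotient of the free algebra on generators `u, v, ξ, g, g⁻¹, x, y` by the defining relations.
-/

noncomputable section

open FreeAlgebra

variable (k : Type) [Field k]

variable {k}

variable (k) in
/-- `z 0, …, z n` is the standard basis of the simple `𝒟`-module `L(n)`
(with the convention `z i = 0` for `i > n`), acting by
`ξ·zᵢ = (n−2i)zᵢ`, `g·zᵢ = zᵢ`, `x·zᵢ = 0`, `u·zᵢ = 0`, `y·zᵢ = z_{i+1}` (`z_{n+1} = 0`),
`v·zᵢ = (i(n−i+1)/2)z_{i−1}` (`z_{−1} = 0`).  A `𝒟`-module `L` admitting such a family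
is a copy of `L(n)`. -/
structure IsStdL (n : ℕ) (L : Type) [AddCommGroup L] [Module k L] [Module (D k) L]
    [IsScalarTower k (D k) L] (z : ℕ → L) : Prop where
  indep : LinearIndependent k fun i : Fin (n + 1) => z i
  spans : Submodule.span k (Set.range z) = ⊤
  eq_zero : ∀ i, n < i → z i = 0
  act_xi : ∀ i, Dxi k • z i = ((n : k) - 2 * i) • z i
  act_g : ∀ i, Dg k • z i = z i
  act_x : ∀ i, Dx k • z i = 0
  act_u : ∀ i, Du k • z i = 0
  act_y : ∀ i, Dy k • z i = z (i + 1)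
  act_v_zero : Dv k • z 0 = 0
  act_v : ∀ i, Dv k • z (i + 1) = ((((i : k) + 1) * ((n : k) - (i : k))) / 2) • z i

set_option linter.unusedSectionVars false
namespace JordanAux

variable {k : Type} [Field k]

section Rels
variable {M : Type} [AddCommGroup M] [Module k M] [Module (D k) M] [IsScalarTower k (D k) M]

lemma relsmul {a b : FreeAlgebra k DGen} (h : DRel k a b) (t : M) :
    RingQuot.mkAlgHom k (DRel k) a • t = RingQuot.mkAlgHom k (DRel k) b • t := by
  rw [RingQuot.mkAlgHom_rel k h]

lemma dtwo (w : M) : (2 : D k) • w = (2 : k) • w := by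
  rw [show (2 : D k) = algebraMap k (D k) 2 from (map_ofNat _ 2).symm, algebraMap_smul]

lemma rel_gginv (t : M) : Dg k • Dginv k • t = t := by
  have h := relsmul (DRel.g_ginv (k := k)) t
  simp only [map_mul, map_one, mul_smul, one_smul] at h
  simpa only [Dg, Dginv] using h

lemma rel_yx (t : M) : Dy k • Dx k • t = Dx k • Dy k • t - (1/2 : k) • (Dx k • Dx k • t) := by
  have h := relsmul (DRel.y_x (k := k)) t
  simp only [map_mul, map_sub, map_smul, mul_smul, sub_smul, smul_assoc] at h
  simpa only [Dy, Dx] using h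

lemma rel_xix (t : M) : Dxi k • Dx k • t = Dx k • Dxi k • t - (2 : k) • (Dx k • t) := by
  have h := relsmul (DRel.xi_x (k := k)) t
  simp only [map_mul, map_sub, map_ofNat, mul_smul, sub_smul, dtwo] at h
  simpa only [Dxi, Dx] using h

lemma rel_xiy (t : M) : Dxi k • Dy k • t = Dy k • Dxi k • t - (2 : k) • (Dy k • t) := by
  have h := relsmul (DRel.xi_y (k := k)) t
  simp only [map_mul, map_sub, map_ofNat, mul_smul, sub_smul, dtwo] at h
  simpa only [Dxi, Dy] using h

lemma rel_vxi (t : M) : Dv k • Dxi k • t = Dxi k • Dv k • t - (2 : k) • (Dv k • t) := by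
  have h := relsmul (DRel.v_xi (k := k)) t
  simp only [map_mul, map_sub, map_ofNat, mul_smul, sub_smul, dtwo] at h
  simpa only [Dxi, Dv] using h

lemma rel_vg (t : M) : Dv k • Dg k • t = Dg k • Dv k • t + Dg k • Du k • t := by
  have h := relsmul (DRel.v_g (k := k)) t
  simp only [map_mul, map_add, mul_smul, add_smul] at h
  simpa only [Dv, Dg, Du] using h

lemma rel_vx (t : M) :
    Dv k • Dx k • t = Dx k • Dv k • t + (t - Dg k • t) + Dx k • Du k • t := by
  have h := relsmul (DRel.v_x (k := k)) t
  simp only [map_mul, map_add, map_sub, map_one, mul_smul, add_smul, sub_smul, one_smul] at h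
  simpa only [Dv, Dg, Du, Dx] using h

lemma rel_vy (t : M) :
    Dv k • Dy k • t = Dy k • Dv k • t + (1/2 : k) • (Dg k • Dxi k • t) + Dy k • Du k • t := by
  have h := relsmul (DRel.v_y (k := k)) t
  simp only [map_mul, map_add, map_smul, mul_smul, add_smul, smul_assoc] at h
  simpa only [Dv, Dg, Du, Dx, Dy, Dxi] using h

end Rels

section ModId
variable {k : Type} [Field k] [CharZero k] {V : Type} [AddCommGroup V] [Module k V]

lemma mod1 (a1 a2 a3 : V) :
    a1 - (2:k) • a2 - ((2:k) • a2 - (2:k) • (2:k) • a3) = a1 - (4:k) • a2 + (4:k) • a3 := by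
  module

lemma mod2 (b1 b2 b3 : V) :
    b1 + (2:k) • b2 + ((2:k) • b2 + (2:k) • (2:k) • b3) = b1 + (4:k) • b2 + (4:k) • b3 := by
  module

lemma mod3 (A B C D : V) :
    (1/4:k) • A - (1/4:k) • (4:k) • B + (1/4:k) • (4:k) • C + ((1/2:k) • B - (1/2:k) • (2:k) • C)
      + ((2:k) • D + (2:k) • (1/2:k) • B) = (1/4:k) • A + (1/2:k) • B + (2:k) • D := by
  match_scalars <;> (field_simp; try ring)

lemma mod4 (A B C : V) :
    A + ((1/2:k) • B + (1/2:k) • (2:k) • C) = A + (1/2:k) • B + C := by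
  match_scalars <;> (field_simp; try ring)

lemma mod5 (A B C D : V) :
    (1/4:k) • A + (1/4:k) • (4:k) • B + (1/4:k) • (4:k) • C + ((1/2:k) • B + (1/2:k) • (2:k) • C)
      + (2:k) • D = (1/4:k) • A + (1/2:k) • B + ((2:k) • D + (2:k) • (1/2:k) • B + (2:k) • C) := by
  match_scalars <;> (field_simp; try ring)

end ModId

end JordanAux
namespace JordanAux
section Std
variable {k : Type} [Field k]
variable [CharZero k] {N : ℕ} {L : Type} [AddCommGroup L] [Module k L] [Module (D k) L]
  [IsScalarTower k (D k) L] {z : ℕ → L} (hL : IsStdL k N L z)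

include hL

lemma std_x (l : L) : Dx k • l = 0 := by
  have hl : l ∈ Submodule.span k (Set.range z) := hL.spans ▸ Submodule.mem_top
  induction hl using Submodule.span_induction with
  | mem w hw => obtain ⟨i, rfl⟩ := hw; exact hL.act_x i
  | zero => exact smul_zero _
  | add a b _ _ ha hb => rw [smul_add, ha, hb, add_zero]
  | smul c a _ ha => rw [smul_comm, ha, smul_zero]

lemma std_u (l : L) : Du k • l = 0 := by
  have hl : l ∈ Submodule.span k (Set.range z) := hL.spans ▸ Submodule.mem_top
  induction hl using Submodule.span_induction with
  | mem w hw => obtain ⟨i, rfl⟩ := hw; exact hL.act_u i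
  | zero => exact smul_zero _
  | add a b _ _ ha hb => rw [smul_add, ha, hb, add_zero]
  | smul c a _ ha => rw [smul_comm, ha, smul_zero]

lemma std_g (l : L) : Dg k • l = l := by
  have hl : l ∈ Submodule.span k (Set.range z) := hL.spans ▸ Submodule.mem_top
  induction hl using Submodule.span_induction with
  | mem w hw => obtain ⟨i, rfl⟩ := hw; exact hL.act_g i
  | zero => exact smul_zero _
  | add a b _ _ ha hb => rw [smul_add, ha, hb]
  | smul c a _ ha => rw [smul_comm, ha]

lemma std_ypow (j i : ℕ) : (Dy k)^j • z i = z (i + j) := by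
  induction j with
  | zero => rw [pow_zero, one_smul]; rfl
  | succ j hj => rw [pow_succ', mul_smul, hj, hL.act_y, ← Nat.add_assoc]

lemma std_cas (l : L) :
    (1/4:k) • (Dxi k • Dxi k • l) + (1/2:k) • (Dxi k • l) + (2:k) • (Dy k • Dv k • l)
      = (((N:k)*(N:k)+2*(N:k))/4) • l := by
  have hl : l ∈ Submodule.span k (Set.range z) := hL.spans ▸ Submodule.mem_top
  induction hl using Submodule.span_induction with
  | mem w hw =>
    obtain ⟨i, rfl⟩ := hw
    have hxi2 : Dxi k • Dxi k • z i = (((N:k) - 2*i)*((N:k) - 2*i)) • z i := by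
      rw [hL.act_xi i, smul_comm, hL.act_xi i, smul_smul]
    have hyv : Dy k • Dv k • z i = (((i:k) * ((N:k) - (i:k) + 1)) / 2) • z i := by
      cases i with
      | zero => simp [hL.act_v_zero]
      | succ j =>
        rw [hL.act_v j, smul_comm, hL.act_y j]
        congr 1
        push_cast
        ring
    rw [hxi2, hL.act_xi i, hyv, smul_smul, smul_smul, smul_smul, ← add_smul, ← add_smul]
    congr 1
    field_simp
    ring
  | zero => simp
  | add a b _ _ ha hb =>
    simp only [smul_add]
    rw [show ∀ p q r s t u : L, p + q + (r + s) + (t + u) = (p + r + t) + (q + s + u) from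
      fun _ _ _ _ _ _ => by abel, ha, hb]
  | smul c a _ ha =>
    rw [smul_comm (Dxi k) c, smul_comm (Dxi k) c, smul_comm (Dv k) c, smul_comm (Dy k) c,
      smul_comm (1/4:k) c, smul_comm (1/2:k) c, smul_comm (2:k) c, ← smul_add, ← smul_add,
      ha, smul_comm]

end Std
end JordanAux
namespace JordanAux
section Eig
variable {k : Type} [Field k] [CharZero k]
variable {N : ℕ} {L : Type} [AddCommGroup L] [Module k L] [Module (D k) L]
  [IsScalarTower k (D k) L] {z : ℕ → L} (hL : IsStdL k N L z)

include hL

lemma std_eigen (w : L) (hw : w ≠ 0) (lam : k) (hxi : Dxi k • w = lam • w) (p : ℕ)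
    (hy : (Dy k)^p • w = 0) : ∃ i : ℕ, i ≤ N ∧ lam = (N:k) - 2*i ∧ N < i + p := by
  classical
  have hspan : ⊤ ≤ Submodule.span k (Set.range fun i : Fin (N+1) => z i) := by
    rw [← hL.spans]
    apply Submodule.span_le.2
    rintro l ⟨i, rfl⟩
    by_cases hi : i ≤ N
    · exact Submodule.subset_span ⟨⟨i, Nat.lt_succ_of_le hi⟩, rfl⟩
    · rw [hL.eq_zero i (Nat.lt_of_not_le hi)]
      exact Submodule.zero_mem _
  let B : Module.Basis (Fin (N+1)) k L := Module.Basis.mk hL.indep hspan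
  have hB : ∀ i : Fin (N+1), B i = z i := fun i => Module.Basis.mk_apply hL.indep hspan i
  set c : Fin (N+1) → k := fun i => B.repr w i with hc
  have hsum : ∑ i : Fin (N+1), c i • z i = w := by
    conv_rhs => rw [← B.sum_repr w]
    exact Finset.sum_congr rfl fun i _ => by rw [hB]
  -- coefficients satisfy c i * (N - 2 i - lam) = 0
  have hcoef : ∀ i : Fin (N+1), c i * (((N:k) - 2*i) - lam) = 0 := by
    have h1 : ∑ i : Fin (N+1), (c i * (((N:k) - 2*i) - lam)) • z i = 0 := by
      have h2 : Dxi k • w = ∑ i : Fin (N+1), (c i * ((N:k) - 2*i)) • z i := by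
        rw [← hsum, Finset.smul_sum]
        exact Finset.sum_congr rfl fun i _ => by
          rw [smul_comm, hL.act_xi i, smul_smul]
      have h3 : lam • w = ∑ i : Fin (N+1), (lam * c i) • z i := by
        rw [← hsum, Finset.smul_sum]
        exact Finset.sum_congr rfl fun i _ => by rw [smul_smul]
      have h4 := hxi
      rw [h2, h3] at h4
      calc ∑ i : Fin (N+1), (c i * (((N:k) - 2*i) - lam)) • z i
          = ∑ i : Fin (N+1), ((c i * ((N:k) - 2*i)) • z i - (lam * c i) • z i) := by
            exact Finset.sum_congr rfl fun i _ => by rw [← sub_smul]; congr 1; ring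
        _ = 0 := by rw [Finset.sum_sub_distrib, h4, sub_self]
    intro i
    exact linearIndependent_iff'.1 hL.indep Finset.univ _ h1 i (Finset.mem_univ i)
  obtain ⟨i0, hi0⟩ : ∃ i0 : Fin (N+1), c i0 ≠ 0 := by
    by_contra hcon
    push_neg at hcon
    apply hw
    rw [← hsum]
    exact Finset.sum_eq_zero fun i _ => by rw [hcon i, zero_smul]
  have hlam : lam = (N:k) - 2*(i0:ℕ) := by
    have := hcoef i0
    rcases mul_eq_zero.1 this with h | h
    · exact absurd h hi0
    · linear_combination -h
  -- all other coefficients vanish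
  have hw2 : w = c i0 • z i0 := by
    rw [← hsum]
    apply Finset.sum_eq_single_of_mem i0 (Finset.mem_univ i0)
    intro i _ hne
    have h5 := hcoef i
    have h6 : ((N:k) - 2*i) - lam ≠ 0 := by
      rw [hlam]
      intro hcon
      apply hne
      have h8 : ((i:ℕ):k) = ((i0:ℕ):k) := by linear_combination (-1/2 : k) * hcon
      exact Fin.ext (Nat.cast_injective h8)
    rcases mul_eq_zero.1 h5 with h | h
    · rw [h, zero_smul]
    · exact absurd h h6
  have hz0 : z ((i0:ℕ) + p) = 0 := by
    rw [hw2, smul_comm, std_ypow hL] at hy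
    rcases smul_eq_zero.1 hy with h | h
    · exact absurd h hi0
    · exact h
  refine ⟨(i0:ℕ), Nat.lt_succ_iff.1 i0.isLt, hlam, ?_⟩
  by_contra hcon
  push_neg at hcon
  have hne := B.ne_zero ⟨(i0:ℕ) + p, Nat.lt_succ_of_le hcon⟩
  rw [hB] at hne
  exact hne hz0

end Eig
end JordanAux
open JordanAux in
/-- If there is a non-split short exact sequence of `𝒟`-modules
`0 → L(n) → T → L(m) → 0`, then `m − n ∈ {−2, 0, 2}`. -/
theorem nontrivial_extension_constraint (k : Type) [Field k] [IsAlgClosed k] [CharZero k]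
    (n m : ℕ)
    (Ln : Type) [AddCommGroup Ln] [Module k Ln] [Module (D k) Ln] [IsScalarTower k (D k) Ln]
    (zn : ℕ → Ln) (hLn : IsStdL k n Ln zn)
    (Lm : Type) [AddCommGroup Lm] [Module k Lm] [Module (D k) Lm] [IsScalarTower k (D k) Lm]
    (zm : ℕ → Lm) (hLm : IsStdL k m Lm zm)
    (T : Type) [AddCommGroup T] [Module k T] [Module (D k) T] [IsScalarTower k (D k) T]
    (ι : Ln →ₗ[D k] T) (π : T →ₗ[D k] Lm)
    (hι : Function.Injective ι) (hπ : Function.Surjective π)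
    (hexact : LinearMap.range ι = LinearMap.ker π)
    (hnonsplit : ¬∃ σ : Lm →ₗ[D k] T, π ∘ₗ σ = LinearMap.id) :
    (m : ℤ) - (n : ℤ) = -2 ∨ (m : ℤ) - (n : ℤ) = 0 ∨ (m : ℤ) - (n : ℤ) = 2 := by
  classical
  obtain ⟨s, hs⟩ := (π.restrictScalars k).exists_rightInverse_of_surjective
      (LinearMap.range_eq_top.2 (by exact hπ))
  have hsl : ∀ l : Lm, π (s l) = l := fun l => by
    have := LinearMap.ext_iff.1 hs l
    simpa using this
  have hπk : ∀ (c : k) (w : T), π (c • w) = c • π w := fun c w =>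
    LinearMap.CompatibleSMul.map_smul π c w
  have hιk : ∀ (c : k) (w : Ln), ι (c • w) = c • ι w := fun c w =>
    LinearMap.CompatibleSMul.map_smul ι c w
  have hkerπ : ∀ t : T, π t = 0 → ∃ l : Ln, ι l = t := by
    intro t ht
    have h1 : t ∈ LinearMap.ker π := ht
    rw [← hexact] at h1
    exact h1
  have hxker : ∀ t : T, π t = 0 → Dx k • t = 0 := by
    intro t ht
    obtain ⟨l, rfl⟩ := hkerπ t ht
    rw [← map_smul, std_x hLn, map_zero]
  by_cases hx : ∀ t : T, Dx k • t = 0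
  · -- x acts by zero, hence g = 1 and u = 0 on T
    have hg : ∀ t : T, Dg k • t = t := by
      intro t
      have h := rel_vx (k := k) t
      rw [hx t, hx (Dv k • t), hx (Du k • t), smul_zero, zero_add, add_zero] at h
      exact (sub_eq_zero.1 h.symm).symm
    have hu : ∀ t : T, Du k • t = 0 := by
      intro t
      have h := rel_vg (k := k) t
      rw [hg t, hg (Dv k • t), hg (Du k • t)] at h
      exact (add_eq_left.1 h.symm)
    have hginv : ∀ t : T, Dginv k • t = t := by
      intro t
      have h := rel_gginv (k := k) t
      rw [hg (Dginv k • t)] at h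
      exact h
    rcases eq_or_ne n m with hnm | hnm
    · right; left; omega
    exfalso
    apply hnonsplit
    set μn : k := ((n:k)*(n:k)+2*(n:k))/4 with hμn
    set μm : k := ((m:k)*(m:k)+2*(m:k))/4 with hμm
    have hμ : μm - μn ≠ 0 := by
      intro h
      apply hnm
      have h1 : (m:k)*(m:k)+2*(m:k) = (n:k)*(n:k)+2*(n:k) := by
        rw [hμm, hμn, sub_eq_zero, div_eq_div_iff (by norm_num) (by norm_num)] at h
        linear_combination h/4
      have h2 : ((m*m+2*m : ℕ):k) = ((n*n+2*n : ℕ):k) := by push_cast; linear_combination h1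
      have h3 : m*m+2*m = n*n+2*n := by exact_mod_cast h2
      nlinarith [h3]
    set Cop : T → T := fun t =>
      (1/4:k) • (Dxi k • Dxi k • t) + (1/2:k) • (Dxi k • t) + (2:k) • (Dy k • Dv k • t)
      with hCop
    have hCadd : ∀ a b : T, Cop (a+b) = Cop a + Cop b := by
      intro a b; simp only [hCop, smul_add]; abel
    have hCk : ∀ (c : k) (t : T), Cop (c • t) = c • Cop t := by
      intro c t
      simp only [hCop]
      rw [smul_comm (Dxi k) c, smul_comm (Dxi k) c, smul_comm (Dv k) c, smul_comm (Dy k) c,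
        smul_comm (1/4:k) c, smul_comm (1/2:k) c, smul_comm (2:k) c, smul_add, smul_add]
    have hC0 : Cop 0 = 0 := by simp [hCop]
    have hvy : ∀ t : T, Dv k • Dy k • t = Dy k • Dv k • t + (1/2:k) • (Dxi k • t) := by
      intro t
      have h := rel_vy (k := k) t
      rw [hu t, smul_zero, add_zero, hg (Dxi k • t)] at h
      exact h
    have e5 : ∀ t : T, Dxi k • Dv k • t = Dv k • Dxi k • t + (2:k) • (Dv k • t) := by
      intro t; rw [rel_vxi t]; abel
    have e1' : ∀ t : T, Dy k • Dxi k • t = Dxi k • Dy k • t + (2:k) • (Dy k • t) := by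
      intro t; rw [rel_xiy t]; abel
    have hCxi : ∀ t : T, Cop (Dxi k • t) = Dxi k • Cop t := by
      intro t
      simp only [hCop]
      have e6 : Dy k • Dv k • Dxi k • t = Dxi k • Dy k • Dv k • t := by
        rw [rel_vxi t]
        simp only [smul_sub, smul_comm (Dy k) (2:k)]
        rw [e1' (Dv k • t)]
        abel
      rw [e6]
      simp only [smul_add, smul_comm (Dxi k) (1/4:k), smul_comm (Dxi k) (1/2:k),
        smul_comm (Dxi k) (2:k)]
    have hCy : ∀ t : T, Cop (Dy k • t) = Dy k • Cop t := by
      intro t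
      simp only [hCop]
      have e2 : Dxi k • Dxi k • Dy k • t
          = Dy k • Dxi k • Dxi k • t - (4:k) • (Dy k • Dxi k • t) + (4:k) • (Dy k • t) := by
        rw [rel_xiy t]
        simp only [smul_sub, smul_comm (Dxi k) (2:k)]
        rw [rel_xiy (Dxi k • t), rel_xiy t]
        simp only [smul_sub]
        exact mod1 _ _ _
      have e3 : Dy k • Dv k • Dy k • t
          = Dy k • Dy k • Dv k • t + (1/2:k) • (Dy k • Dxi k • t) := by
        rw [hvy t]
        simp only [smul_add, smul_comm (Dy k) (1/2:k)]
      rw [e2, e3, rel_xiy t]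
      simp only [smul_add, smul_sub, smul_comm (Dy k) (1/4:k),
        smul_comm (Dy k) (1/2:k), smul_comm (Dy k) (2:k)]
      exact mod3 _ _ _ _
    have hCv : ∀ t : T, Cop (Dv k • t) = Dv k • Cop t := by
      intro t
      simp only [hCop]
      have e7 : Dxi k • Dxi k • Dv k • t
          = Dv k • Dxi k • Dxi k • t + (4:k) • (Dv k • Dxi k • t) + (4:k) • (Dv k • t) := by
        rw [e5 t]
        simp only [smul_add, smul_comm (Dxi k) (2:k)]
        rw [e5 (Dxi k • t), e5 t]
        simp only [smul_add]
        exact mod2 _ _ _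
      have e8 : Dv k • Dy k • Dv k • t
          = Dy k • Dv k • Dv k • t + (1/2:k) • (Dv k • Dxi k • t) + (Dv k • t) := by
        rw [hvy (Dv k • t), e5 t]
        simp only [smul_add]
        exact mod4 _ _ _
      rw [e7, e5 t]
      simp only [smul_add, smul_comm (Dv k) (1/4:k), smul_comm (Dv k) (1/2:k),
        smul_comm (Dv k) (2:k)]
      rw [e8]
      simp only [smul_add]
      exact mod5 _ _ _ _
    have hCd : ∀ (d : D k) (t : T), Cop (d • t) = d • Cop t := by
      intro d
      obtain ⟨a, rfl⟩ := RingQuot.mkAlgHom_surjective k (DRel k) d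
      induction a using FreeAlgebra.induction with
      | grade0 r =>
        intro t
        rw [AlgHom.commutes, algebraMap_smul, algebraMap_smul, hCk]
      | grade1 w =>
        cases w with
        | u =>
          intro t
          show Cop (Du k • t) = Du k • Cop t
          rw [hu t, hC0, hu (Cop t)]
        | v => intro t; exact hCv t
        | xi => intro t; exact hCxi t
        | g =>
          intro t
          show Cop (Dg k • t) = Dg k • Cop t
          rw [hg t, hg (Cop t)]
        | ginv =>
          intro t
          show Cop (Dginv k • t) = Dginv k • Cop t
          rw [hginv t, hginv (Cop t)]
        | x =>
          intro t
          show Cop (Dx k • t) = Dx k • Cop t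
          rw [hx t, hC0, hx (Cop t)]
        | y => intro t; exact hCy t
      | mul a b ha hb =>
        intro t
        rw [map_mul, mul_smul, ha, hb, ← mul_smul]
      | add a b ha hb =>
        intro t
        rw [map_add, add_smul, hCadd, ha, hb, add_smul]
    have hCι : ∀ l : Ln, Cop (ι l) = μn • ι l := by
      intro l
      have h2 : (1/4:k) • (Dxi k • Dxi k • ι l) + (1/2:k) • (Dxi k • ι l)
          + (2:k) • (Dy k • Dv k • ι l)
          = ι ((1/4:k) • (Dxi k • Dxi k • l) + (1/2:k) • (Dxi k • l)
              + (2:k) • (Dy k • Dv k • l)) := by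
        simp only [map_add, hιk, map_smul]
      simp only [hCop]
      rw [h2, std_cas hLn l, hιk, hμn]
    have hCπ : ∀ t : T, π (Cop t) = μm • π t := by
      intro t
      simp only [hCop]
      simp only [map_add, hπk, map_smul]
      rw [std_cas hLm (π t), hμm]
    set P : T → T := fun t => (μm - μn)⁻¹ • (Cop t - μn • t) with hP
    have hPι : ∀ l : Ln, P (ι l) = 0 := by
      intro l; simp only [hP]; rw [hCι, sub_self, smul_zero]
    have hPker : ∀ t : T, π t = 0 → P t = 0 := by
      intro t ht; obtain ⟨l, rfl⟩ := hkerπ t ht; exact hPι l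
    have hπP : ∀ t : T, π (P t) = π t := by
      intro t
      simp only [hP]
      rw [hπk, map_sub, hCπ, hπk, ← sub_smul, smul_smul, inv_mul_cancel₀ hμ, one_smul]
    have hPd : ∀ (d : D k) (t : T), P (d • t) = d • P t := by
      intro d t
      simp only [hP]
      rw [hCd, smul_comm μn d, ← smul_sub, smul_comm (μm - μn)⁻¹ d]
    have hPadd : ∀ a b : T, P (a+b) = P a + P b := by
      intro a b
      simp only [hP]
      rw [hCadd, ← smul_add]
      congr 1
      rw [smul_add]
      abel
    refine ⟨⟨⟨fun l => P (s l), fun a b => ?_⟩, fun d l => ?_⟩, ?_⟩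
    · show P (s (a + b)) = P (s a) + P (s b)
      rw [map_add, hPadd]
    · show P (s (d • l)) = d • P (s l)
      have hδ : π (s (d • l) - d • s l) = 0 := by
        rw [map_sub, hsl, map_smul, hsl, sub_self]
      have h9 : P (s (d • l)) = P (d • s l + (s (d • l) - d • s l)) := by
        congr 1; abel
      rw [h9, hPadd, hPker _ hδ, add_zero, hPd]
    · apply LinearMap.ext
      intro l
      simp only [LinearMap.comp_apply, LinearMap.id_apply, LinearMap.coe_mk, AddHom.coe_mk]
      rw [hπP, hsl]
  · -- x acts nontrivially
    push_neg at hx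
    obtain ⟨t1, ht1⟩ := hx
    set χ : Lm → T := fun l => Dx k • s l with hχ
    have hχker : ∀ l : Lm, π (χ l) = 0 := by
      intro l
      simp only [hχ]
      rw [map_smul, hsl, std_x hLm]
    have hχdiff : ∀ t : T, Dx k • t = χ (π t) := by
      intro t
      have h1 : π (t - s (π t)) = 0 := by rw [map_sub, hsl, sub_self]
      have h2 := hxker _ h1
      rw [smul_sub, sub_eq_zero] at h2
      exact h2
    have hχy : ∀ l : Lm, χ (Dy k • l) = Dy k • χ l := by
      intro l
      have h2 : π (s (Dy k • l) - Dy k • s l) = 0 := by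
        rw [map_sub, hsl, map_smul, hsl, sub_self]
      have h3 := hxker _ h2
      rw [smul_sub, sub_eq_zero] at h3
      have h4 := rel_yx (k := k) (s l)
      have h5 : Dx k • Dx k • s l = 0 := hxker _ (hχker l)
      rw [h5, smul_zero, sub_zero] at h4
      simp only [hχ]
      rw [h3, ← h4]
    have hχpow : ∀ (j : ℕ) (l : Lm), χ ((Dy k)^j • l) = (Dy k)^j • χ l := by
      intro j
      induction j with
      | zero => intro l; rw [pow_zero, one_smul, one_smul]
      | succ j hj =>
        intro l
        rw [pow_succ', mul_smul, hχy, hj, ← mul_smul, ← pow_succ']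
    have hχlin : ∀ (c : k) (l : Lm), χ (c • l) = c • χ l := by
      intro c l
      simp only [hχ]
      rw [map_smul s, smul_comm]
    have hχ0 : χ (zm 0) ≠ 0 := by
      intro h0
      apply ht1
      rw [hχdiff t1]
      have hall : ∀ l : Lm, χ l = 0 := by
        intro l
        have hl : l ∈ Submodule.span k (Set.range zm) := hLm.spans ▸ Submodule.mem_top
        induction hl using Submodule.span_induction with
        | mem w hw =>
          obtain ⟨j, rfl⟩ := hw
          have hzmj : zm j = (Dy k)^j • zm 0 := by rw [std_ypow hLm j 0, Nat.zero_add]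
          rw [hzmj, hχpow, h0, smul_zero]
        | zero => simp only [hχ]; rw [map_zero, smul_zero]
        | add a b _ _ ha hb => simp only [hχ] at ha hb ⊢; rw [map_add, smul_add, ha, hb, add_zero]
        | smul c a _ ha => rw [hχlin, ha, smul_zero]
      exact hall _
    obtain ⟨w', hw'⟩ := hkerπ _ (hχker (zm 0))
    have hw'0 : w' ≠ 0 := fun h => hχ0 (by rw [← hw', h, map_zero])
    have hxiχ : Dxi k • χ (zm 0) = ((m:k) - 2) • χ (zm 0) := by
      have h2 : π (s (Dxi k • zm 0) - Dxi k • s (zm 0)) = 0 := by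
        rw [map_sub, hsl, map_smul, hsl, sub_self]
      have h3 := hxker _ h2
      rw [smul_sub, sub_eq_zero] at h3
      have h5 := rel_xix (k := k) (s (zm 0))
      have h6 : Dxi k • zm 0 = (m:k) • zm 0 := by
        have h7 := hLm.act_xi 0
        simpa using h7
      have h8 : χ (Dxi k • zm 0) = (m:k) • χ (zm 0) := by rw [h6, hχlin]
      have h9 : χ (Dxi k • zm 0) = Dx k • Dxi k • s (zm 0) := by
        simp only [hχ]; rw [h3]
      have h10 : Dx k • Dxi k • s (zm 0) = Dxi k • χ (zm 0) + (2:k) • χ (zm 0) := by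
        simp only [hχ]
        rw [eq_comm, ← sub_eq_zero]
        rw [h5]
        abel
      have h11 : (m:k) • χ (zm 0) = Dxi k • χ (zm 0) + (2:k) • χ (zm 0) := by
        rw [← h8, h9, h10]
      rw [sub_smul, eq_comm, sub_eq_iff_eq_add]
      rw [h11]
    have hxiw' : Dxi k • w' = ((m:k) - 2) • w' := by
      apply hι
      rw [map_smul, hw', hxiχ, hιk, hw']
    have hyχ : (Dy k)^(m+1) • χ (zm 0) = 0 := by
      rw [← hχpow, std_ypow hLm, Nat.zero_add, hLm.eq_zero (m+1) (Nat.lt_succ_self m)]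
      simp only [hχ]
      rw [map_zero, smul_zero]
    have hyw' : (Dy k)^(m+1) • w' = 0 := by
      apply hι
      rw [map_smul, hw', hyχ, map_zero]
    obtain ⟨i, hiN, hlam, hlt⟩ := std_eigen hLn w' hw'0 ((m:k) - 2) hxiw' (m+1) hyw'
    have hnat : m + 2*i = n + 2 := by
      have hcast : ((m + 2*i : ℕ) : k) = ((n + 2 : ℕ) : k) := by
        push_cast
        linear_combination hlam
      exact_mod_cast hcast
    omega
end
end
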